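/- arXiv:1103.3188 — 3 statements merged into one kernel-verified Lean document; each statement's English description precedes it below -/
import Mathlib

section
/- Let (K,d) be a precompact metric space with a fixed point x₀ ∈ K, let F be the set of 1-Lipschitz real-valued functions on K vanishing at x₀ endowed with the uniform distance, and let R = sup_{x ∈ K} d(x, x₀). Then for every ε > 0, the covering number of F satisfies N(F, ε) ≤ ( 2 + 2⌊3R/ε⌋ )^{N(K, ε/3)}. -/
open MeasureTheory ProbabilityTheory Real
open scoped ENNReal NNReal

noncomputable section

/-- Optimal transport cost between `μ` and `ν` for the cost function `c`. -/
def transportCost {E : Type*} [MeasurableSpace E] (c : E → E → ℝ) (μ ν : Measure E) : ℝ :=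
  sInf {v : ℝ | ∃ pl : Measure (E × E), IsProbabilityMeasure pl ∧
    pl.map Prod.fst = μ ∧ pl.map Prod.snd = ν ∧ v = ∫ p, c p.1 p.2 ∂pl}

/-- The 1-Wasserstein distance. -/
def W1 {E : Type*} [MeasurableSpace E] [PseudoMetricSpace E] (μ ν : Measure E) : ℝ :=
  transportCost dist μ ν

open Classical in
/-- Relative entropy `H(ν|μ)`. -/
def relEnt {E : Type*} [MeasurableSpace E] (ν μ : Measure E) : ℝ≥0∞ :=
  if ν ≪ μ then ENNReal.ofReal (∫ x, Real.log ((ν.rnDeriv μ) x).toReal ∂ν) else ⊤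

/-- Empirical measure of the first `n` samples of the process `X`. -/
def empMeas {Ω E : Type*} [MeasurableSpace E] (X : ℕ → Ω → E) (n : ℕ) (ω : Ω) : Measure E :=
  (n : ℝ≥0∞)⁻¹ • ∑ i ∈ Finset.range n, Measure.dirac (X i ω)

/-- Covering number: minimal number of balls of radius `δ` needed to cover `A`. -/
def covN {X : Type*} [PseudoMetricSpace X] (A : Set X) (δ : ℝ) : ℕ :=
  sInf {m : ℕ | ∃ s : Finset X, s.card = m ∧ A ⊆ ⋃ y ∈ s, Metric.closedBall y δ}

/-- The set of 1-Lipschitz functions on `K` vanishing at `x₀`, with the uniform distance. -/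
def FK {E : Type*} [MetricSpace E] (K : Set E) (x₀ : E) :
    Set (BoundedContinuousFunction K ℝ) :=
  {f | LipschitzWith 1 ⇑f ∧ ∀ h : x₀ ∈ K, f ⟨x₀, h⟩ = 0}

/-- Monotone conjugate `α⊛(s) = sup_{u ≥ 0} (s·u − α(u))`. -/
def monoConj (al : ℝ → ℝ) (s : ℝ) : ℝ :=
  sSup {v : ℝ | ∃ u : ℝ, 0 ≤ u ∧ v = s * u - al u}

/-- `Γ(C, n) = inf_{λ > 0} (1/λ) (log C + n α⊛(λ/n))`. -/
def Gam (al : ℝ → ℝ) (C : ℝ) (n : ℕ) : ℝ :=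
  sInf {g : ℝ | ∃ l : ℝ, 0 < l ∧ g = (1 / l) * (Real.log C + (n : ℝ) * monoConj al (l / (n : ℝ)))}

end

private lemma grid_approx {ε R v : ℝ} (hε : 0 < ε) (hv : |v| ≤ R) :
    ∃ k : ℤ, k ∈ Finset.Icc (-(Nat.floor (3 * R / ε) : ℤ) - 1) ((Nat.floor (3 * R / ε) : ℤ)) ∧
      |v - ((k : ℝ) + 1/2) * (ε / 3)| ≤ ε / 6 := by
  have hR : 0 ≤ R := le_trans (abs_nonneg v) hv
  have hvR : v ≤ R := le_trans (le_abs_self v) hv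
  have hvR' : -R ≤ v := by
    have := neg_abs_le v; linarith
  have hRe : (0:ℝ) ≤ 3 * R / ε := by positivity
  set u : ℝ := 3 * v / ε with hu
  refine ⟨⌊u⌋, ?_, ?_⟩
  · rw [Finset.mem_Icc]
    constructor
    · rw [Int.le_floor]
      have h1 : 3 * R / ε < (Nat.floor (3 * R / ε) : ℝ) + 1 := Nat.lt_floor_add_one _
      have h2 : 3 * (-R) / ε ≤ u := by
        rw [hu]; gcongr <;> linarith
      push_cast
      have h3 : 3 * (-R) / ε = -(3 * R / ε) := by ring
      linarith [h3 ▸ h2]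
    · rw [Int.natCast_floor_eq_floor hRe]
      apply Int.floor_le_floor
      rw [hu]; gcongr <;> linarith
  · have h1 : (⌊u⌋ : ℝ) ≤ u := Int.floor_le _
    have h2 : u < ⌊u⌋ + 1 := Int.lt_floor_add_one _
    have hv' : v = u * (ε / 3) := by
      rw [hu]; field_simp
    have ha1 : 0 ≤ (u - ⌊u⌋) * (ε / 3) := mul_nonneg (by linarith) (by positivity)
    have ha2 : (u - ⌊u⌋) * (ε / 3) ≤ ε / 3 := by nlinarith
    rw [abs_le]
    constructor <;> nlinarith

/-- Covering numbers of the set of 1-Lipschitz functions vanishing at a base point on a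
precompact metric space (first covering-number proposition of the paper). -/
theorem covering_number_lipschitz_ball
    {K : Type*} [MetricSpace K] (hK : TotallyBounded (Set.univ : Set K))
    (x₀ : K) (R : ℝ) (hR : R = ⨆ x : K, dist x x₀)
    (ε : ℝ) (hε : 0 < ε) :
    covN {f : BoundedContinuousFunction K ℝ | LipschitzWith 1 ⇑f ∧ f x₀ = 0} ε ≤
      (2 + 2 * Nat.floor (3 * R / ε)) ^ covN (Set.univ : Set K) (ε / 3) := by
  classical
  set m : ℕ := Nat.floor (3 * R / ε) with hm
  set n : ℕ := covN (Set.univ : Set K) (ε / 3) with hn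
  set F : Set (BoundedContinuousFunction K ℝ) :=
    {f : BoundedContinuousFunction K ℝ | LipschitzWith 1 ⇑f ∧ f x₀ = 0} with hF
  -- a finite (ε/3)-net of K of cardinality exactly n
  have hSne : {k : ℕ | ∃ s : Finset K, s.card = k ∧
      (Set.univ : Set K) ⊆ ⋃ y ∈ s, Metric.closedBall y (ε / 3)}.Nonempty := by
    obtain ⟨t, htfin, htcov⟩ := (Metric.totallyBounded_iff.mp hK) (ε / 3) (by positivity)
    refine ⟨htfin.toFinset.card, htfin.toFinset, rfl, ?_⟩
    intro x hx
    obtain ⟨y, hy, hxy⟩ := Set.mem_iUnion₂.mp (htcov hx)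
    exact Set.mem_iUnion₂.mpr ⟨y, htfin.mem_toFinset.mpr hy, Metric.ball_subset_closedBall hxy⟩
  have hnmem := Nat.sInf_mem hSne
  obtain ⟨T, hTcard, hTcov⟩ : ∃ s : Finset K, s.card = n ∧
      (Set.univ : Set K) ⊆ ⋃ y ∈ s, Metric.closedBall y (ε / 3) := hnmem
  -- distances to x₀ are bounded by R
  have hdist : ∀ y : K, dist y x₀ ≤ R := by
    intro y
    have hbdd : BddAbove (Set.range fun x : K => dist x x₀) := by
      obtain ⟨r, hr⟩ := (Metric.isBounded_iff_subset_closedBall x₀).mp hK.isBounded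
      exact ⟨r, by rintro _ ⟨x, rfl⟩; exact hr (Set.mem_univ x)⟩
    rw [hR]
    exact le_ciSup hbdd y
  -- index type for the grid of candidate value profiles
  set G : Finset ℤ := Finset.Icc (-(m : ℤ) - 1) (m : ℤ) with hG
  have hvalbd : ∀ f ∈ F, ∀ y : K, |f y| ≤ R := by
    intro f hf y
    have h1 : dist (f y) (f x₀) ≤ 1 * dist y x₀ := hf.1.dist_le_mul y x₀
    have h2 : f x₀ = 0 := hf.2
    rw [Real.dist_eq, h2, sub_zero] at h1
    calc |f y| ≤ 1 * dist y x₀ := h1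
    _ ≤ R := by rw [one_mul]; exact hdist y
  -- choice of representatives
  set val : ({ y // y ∈ T } → { k // k ∈ G }) → { y // y ∈ T } → ℝ :=
    fun i y => ((i y : ℤ) + 1/2) * (ε / 3) with hval
  set P : ({ y // y ∈ T } → { k // k ∈ G }) → Prop :=
    fun i => ∃ f, f ∈ F ∧ ∀ y : { y // y ∈ T }, |f (y : K) - val i y| ≤ ε / 6 with hP
  set c : ({ y // y ∈ T } → { k // k ∈ G }) → BoundedContinuousFunction K ℝ :=
    fun i => if h : P i then h.choose else 0 with hc
  set s : Finset (BoundedContinuousFunction K ℝ) := Finset.image c Finset.univ with hs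
  have hcover : F ⊆ ⋃ f ∈ s, Metric.closedBall f ε := by
    intro g hg
    -- build the profile of g
    have hpick : ∀ y : { y // y ∈ T }, ∃ k : ℤ, k ∈ G ∧
        |g (y : K) - ((k : ℝ) + 1/2) * (ε / 3)| ≤ ε / 6 := by
      intro y
      obtain ⟨k, hk1, hk2⟩ := grid_approx hε (hvalbd g hg (y : K))
      exact ⟨k, hk1, hk2⟩
    choose kk hkG hkapp using hpick
    set i : { y // y ∈ T } → { k // k ∈ G } := fun y => ⟨kk y, hkG y⟩ with hi
    have hPi : P i := ⟨g, hg, fun y => hkapp y⟩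
    have hci : c i ∈ F ∧ ∀ y : { y // y ∈ T }, |c i (y : K) - val i y| ≤ ε / 6 := by
      rw [hc]; simp only [dif_pos hPi]
      exact ⟨hPi.choose_spec.1, hPi.choose_spec.2⟩
    refine Set.mem_iUnion₂.mpr ⟨c i, Finset.mem_image_of_mem c (Finset.mem_univ i), ?_⟩
    rw [Metric.mem_closedBall]
    refine BoundedContinuousFunction.dist_le hε.le |>.mpr ?_
    intro x
    obtain ⟨y, hyT, hxy⟩ := Set.mem_iUnion₂.mp (hTcov (Set.mem_univ x))
    have hxy' : dist x y ≤ ε / 3 := hxy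
    have h1 : dist (g x) (g y) ≤ 1 * dist x y := hg.1.dist_le_mul x y
    have h2 : dist (c i x) (c i y) ≤ 1 * dist x y := hci.1.1.dist_le_mul x y
    have h3 : |g y - val i ⟨y, hyT⟩| ≤ ε / 6 := hkapp ⟨y, hyT⟩
    have h4 : |c i y - val i ⟨y, hyT⟩| ≤ ε / 6 := hci.2 ⟨y, hyT⟩
    rw [Real.dist_eq] at h1 h2 ⊢
    have := abs_sub_abs_le_abs_sub (g x) (c i x)
    calc |g x - c i x| ≤ |g x - g y| + |g y - val i ⟨y, hyT⟩| + |val i ⟨y, hyT⟩ - c i y|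
        + |c i y - c i x| := by
          have t1 := abs_sub_le (g x) (g y) (c i x)
          have t2 := abs_sub_le (g y) (val i ⟨y, hyT⟩) (c i x)
          have t3 := abs_sub_le (val i ⟨y, hyT⟩) (c i y) (c i x)
          linarith
      _ ≤ ε := by
          rw [abs_sub_comm (val i ⟨y, hyT⟩) (c i y), abs_sub_comm (c i y) (c i x)]
          linarith
  have hle : covN F ε ≤ s.card := Nat.sInf_le ⟨s, rfl, hcover⟩
  have hcard : s.card ≤ (2 + 2 * m) ^ n := by
    calc s.card ≤ Fintype.card ({ y // y ∈ T } → { k // k ∈ G }) :=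
          (Finset.card_image_le).trans (by simp)
      _ = G.card ^ T.card := by
          rw [Fintype.card_fun, Fintype.card_coe, Fintype.card_coe]
      _ = (2 + 2 * m) ^ n := by
          rw [hTcard, hG, Int.card_Icc]
          congr 1
          omega
  exact hle.trans hcard
end

section
/- Let (K,d) be a precompact connected metric space with a fixed point x₀ ∈ K, let F be the set of 1-Lipschitz real-valued functions on K vanishing at x₀ endowed with the uniform distance, and let R = sup_{x ∈ K} d(x, x₀). Then for every ε > 0, N(F, ε) ≤ ( 2 + 2⌊4R/ε⌋ ) · 2^{N(K, ε/16)}. -/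
open MeasureTheory ProbabilityTheory Real
open scoped ENNReal NNReal

noncomputable def approxVal (η : ℝ) (p : ℕ → ℕ) (hp : ∀ i, 0 < i → p i < i) (g : ℕ → ℝ) : ℕ → ℝ
  | 0 => (⌊g 0 / η⌋ : ℝ) * η
  | (i+1) => approxVal η p hp g (p (i+1)) +
      (if approxVal η p hp g (p (i+1)) ≤ g (i+1) then η else -η)
  decreasing_by exact hp _ (Nat.succ_pos _)

lemma approxVal_err (η : ℝ) (hη : 0 < η) (p : ℕ → ℕ) (hp : ∀ i, 0 < i → p i < i)
    (g : ℕ → ℝ) (N : ℕ) (hstep : ∀ i, 0 < i → i < N → |g i - g (p i)| ≤ η) :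
    ∀ i < N, |approxVal η p hp g i - g i| ≤ η := by
  intro i
  induction i using Nat.strong_induction_on with
  | _ i ih =>
    intro hiN
    match i with
    | 0 =>
      have h1 := Int.floor_le (g 0 / η)
      have h2 := Int.lt_floor_add_one (g 0 / η)
      have h3 : (⌊g 0 / η⌋ : ℝ) * η ≤ g 0 := by
        have := mul_le_mul_of_nonneg_right h1 hη.le
        rwa [div_mul_cancel₀ _ hη.ne'] at this
      have h4 : g 0 < ((⌊g 0 / η⌋ : ℝ) + 1) * η := by
        have := mul_lt_mul_of_pos_right h2 hη
        rwa [div_mul_cancel₀ _ hη.ne'] at this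
      rw [approxVal, abs_le]
      constructor <;> nlinarith
    | (j+1) =>
      have hpj : p (j+1) < j+1 := hp _ (Nat.succ_pos _)
      have hprev : |approxVal η p hp g (p (j+1)) - g (p (j+1))| ≤ η :=
        ih (p (j+1)) hpj (lt_trans hpj hiN)
      have hst : |g (j+1) - g (p (j+1))| ≤ η := hstep _ (Nat.succ_pos _) hiN
      rw [approxVal]
      split
      · rename_i h; rw [abs_le] at hprev hst ⊢; constructor <;> linarith
      · rename_i h; rw [not_le] at h; rw [abs_le] at hprev hst ⊢; constructor <;> linarith

lemma approxVal_congr (η : ℝ) (p : ℕ → ℕ) (hp : ∀ i, 0 < i → p i < i)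
    (g g' : ℕ → ℝ) (N : ℕ) (h0 : ⌊g 0 / η⌋ = ⌊g' 0 / η⌋)
    (hb : ∀ i, 0 < i → i < N →
      ((approxVal η p hp g (p i) ≤ g i) ↔ (approxVal η p hp g' (p i) ≤ g' i))) :
    ∀ i < N, approxVal η p hp g i = approxVal η p hp g' i := by
  intro i
  induction i using Nat.strong_induction_on with
  | _ i ih =>
    intro hiN
    match i with
    | 0 => rw [approxVal, approxVal, h0]
    | (j+1) =>
      have hpj : p (j+1) < j+1 := hp _ (Nat.succ_pos _)
      have hprev := ih (p (j+1)) hpj (lt_trans hpj hiN)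
      rw [approxVal, approxVal]
      by_cases h : approxVal η p hp g (p (j+1)) ≤ g (j+1)
      · rw [if_pos h, if_pos ((hb _ (Nat.succ_pos _) hiN).1 h), hprev]
      · rw [if_neg h, if_neg (fun hc => h ((hb _ (Nat.succ_pos _) hiN).2 hc)), hprev]


open Metric in
lemma exists_adjacent_point {K : Type*} [MetricSpace K] [ConnectedSpace K]
    {s t : Finset K} {δ : ℝ} (hδ : 0 < δ)
    (hcov : (Set.univ : Set K) ⊆ ⋃ y ∈ s, closedBall y δ)
    (hts : t ⊆ s) (htne : t.Nonempty) (hne : t ≠ s) :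
    ∃ z ∈ s, z ∉ t ∧ ∃ y ∈ t, dist z y ≤ 4 * δ := by
  classical
  set U : Set K := ⋃ y ∈ t, ball y (2*δ) with hU
  set V : Set K := ⋃ z ∈ (s \ t), ball z (2*δ) with hV
  have hUo : IsOpen U := isOpen_biUnion fun _ _ => isOpen_ball
  have hVo : IsOpen V := isOpen_biUnion fun _ _ => isOpen_ball
  have hcover : (Set.univ : Set K) ⊆ U ∪ V := by
    intro x _
    obtain ⟨y, hy, hxy⟩ := Set.mem_iUnion₂.1 (hcov (Set.mem_univ x))
    have hxy' : x ∈ ball y (2*δ) := by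
      rw [mem_closedBall] at hxy; rw [mem_ball]; linarith
    by_cases hyt : y ∈ t
    · exact Or.inl (Set.mem_iUnion₂.2 ⟨y, hyt, hxy'⟩)
    · exact Or.inr (Set.mem_iUnion₂.2 ⟨y, Finset.mem_sdiff.2 ⟨hy, hyt⟩, hxy'⟩)
  obtain ⟨y₀, hy₀⟩ := htne
  have hUne : (Set.univ ∩ U).Nonempty :=
    ⟨y₀, Set.mem_univ _, Set.mem_iUnion₂.2 ⟨y₀, hy₀, mem_ball_self (by linarith)⟩⟩
  obtain ⟨z₀, hz₀s, hz₀t⟩ := Finset.exists_of_ssubset (lt_of_le_of_ne hts hne)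
  have hVne : (Set.univ ∩ V).Nonempty :=
    ⟨z₀, Set.mem_univ _, Set.mem_iUnion₂.2 ⟨z₀, Finset.mem_sdiff.2 ⟨hz₀s, hz₀t⟩,
      mem_ball_self (by linarith)⟩⟩
  obtain ⟨x, -, hxU, hxV⟩ := isPreconnected_univ U V hUo hVo hcover hUne hVne
  obtain ⟨y, hyt, hxy⟩ := Set.mem_iUnion₂.1 hxU
  obtain ⟨z, hzst, hxz⟩ := Set.mem_iUnion₂.1 hxV
  rw [mem_ball] at hxy hxz
  obtain ⟨hzs, hzt⟩ := Finset.mem_sdiff.1 hzst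
  exact ⟨z, hzs, hzt, y, hyt, by
    have := dist_triangle z x y
    rw [dist_comm z x] at this
    linarith⟩

/-- chain property: every later element is close to some earlier element -/
def chainP {K : Type*} [MetricSpace K] (d4 : ℝ) (l : List K) (x : K) : Prop :=
  ∀ i, 0 < i → i < l.length → ∃ j, j < i ∧ dist (l.getD i x) (l.getD j x) ≤ d4

lemma exists_chain_list {K : Type*} [MetricSpace K] [ConnectedSpace K] [DecidableEq K]
    (s : Finset K) (hsne : s.Nonempty) {δ : ℝ} (hδ : 0 < δ)
    (hcov : (Set.univ : Set K) ⊆ ⋃ y ∈ s, Metric.closedBall y δ) (x : K) :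
    ∃ l : List K, l ≠ [] ∧ l.Nodup ∧ l.toFinset = s ∧ chainP (4*δ) l x := by
  classical
  suffices H : ∀ n (l : List K), l ≠ [] → l.Nodup → l.toFinset ⊆ s →
      s.card ≤ l.length + n → chainP (4*δ) l x →
      ∃ l' : List K, l' ≠ [] ∧ l'.Nodup ∧ l'.toFinset = s ∧ chainP (4*δ) l' x by
    obtain ⟨y₀, hy₀⟩ := hsne
    refine H s.card ([y₀]) (by simp) (by simp) (by simp only [List.toFinset_cons, List.toFinset_nil, insert_empty_eq]; simpa using hy₀) (by simp) ?_
    intro i hi hil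
    simp at hil; omega
  intro n
  induction n with
  | zero =>
    intro l hlne hnd hsub hcard hch
    have hlen : l.toFinset.card = l.length := List.toFinset_card_of_nodup hnd
    have : l.toFinset = s := Finset.eq_of_subset_of_card_le hsub (by omega)
    exact ⟨l, hlne, hnd, this, hch⟩
  | succ n ih =>
    intro l hlne hnd hsub hcard hch
    by_cases heq : l.toFinset = s
    · exact ⟨l, hlne, hnd, heq, hch⟩
    · have htne : l.toFinset.Nonempty := by
        cases l with
        | nil => exact absurd rfl hlne
        | cons a l => exact ⟨a, by simp⟩
      obtain ⟨z, hzs, hzt, y, hyt, hdzy⟩ :=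
        exists_adjacent_point hδ hcov hsub htne heq
      have hznl : z ∉ l := fun h => hzt (List.mem_toFinset.2 h)
      refine ih (l ++ [z]) (by simp) ?_ ?_ ?_ ?_
      · rw [List.nodup_append]
        exact ⟨hnd, List.nodup_singleton z, fun a ha b hb h => hznl (by simp at hb; subst hb; subst h; exact ha)⟩
      · intro a ha
        rw [List.mem_toFinset, List.mem_append] at ha
        rcases ha with h | h
        · exact hsub (List.mem_toFinset.2 h)
        · simp at h; subst h; exact hzs
      · simp; omega
      · intro i hi hil
        simp only [List.length_append, List.length_singleton] at hil
        by_cases hi' : i < l.length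
        · obtain ⟨j, hj, hd⟩ := hch i hi hi'
          refine ⟨j, hj, ?_⟩
          rwa [List.getD_append _ _ _ _ hi', List.getD_append _ _ _ _ (lt_trans hj hi')]
        · have hieq : i = l.length := by omega
          obtain ⟨m, hm⟩ := List.mem_iff_get.1 (List.mem_toFinset.1 hyt)
          refine ⟨m.1, by omega, ?_⟩
          have h1 : (l ++ [z]).getD i x = z := by
            subst hieq
            rw [List.getD_eq_getElem _ _ (by simp)]
            simp
          have h2 : (l ++ [z]).getD m.1 x = y := by
            rw [List.getD_append _ _ _ _ m.2, List.getD_eq_getElem _ _ m.2]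
            simpa using hm
          rw [h1, h2]
          exact hdzy

/-- Covering numbers of the set of 1-Lipschitz functions vanishing at a base point on a
precompact connected metric space (Proposition `prop_covering_number_lip` of the paper). -/
theorem covering_number_lipschitz_ball_connected
    {K : Type*} [MetricSpace K] [ConnectedSpace K]
    (hK : TotallyBounded (Set.univ : Set K))
    (x₀ : K) (R : ℝ) (hR : R = ⨆ x : K, dist x x₀)
    (ε : ℝ) (hε : 0 < ε) :
    covN {f : BoundedContinuousFunction K ℝ | LipschitzWith 1 ⇑f ∧ f x₀ = 0} ε ≤
      (2 + 2 * Nat.floor (4 * R / ε)) * 2 ^ covN (Set.univ : Set K) (ε / 16) := by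
  classical
  set δ : ℝ := ε / 16 with hδdef
  have hδ : 0 < δ := by positivity
  set η : ℝ := ε / 4 with hηdef
  have hη : 0 < η := by positivity
  -- obtain an optimal net `s`
  obtain ⟨T, hTfin, hTcov⟩ := Metric.totallyBounded_iff.1 hK δ hδ
  have hmemset : covN (Set.univ : Set K) δ ∈
      {m : ℕ | ∃ s : Finset K, s.card = m ∧
        (Set.univ : Set K) ⊆ ⋃ y ∈ s, Metric.closedBall y δ} := by
    apply Nat.sInf_mem
    refine ⟨hTfin.toFinset.card, hTfin.toFinset, rfl, ?_⟩
    intro x hx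
    obtain ⟨y, hy, hxy⟩ := Set.mem_iUnion₂.1 (hTcov hx)
    exact Set.mem_iUnion₂.2 ⟨y, hTfin.mem_toFinset.2 hy, Metric.ball_subset_closedBall hxy⟩
  obtain ⟨s, hscard, hscov⟩ := hmemset
  have hsne : s.Nonempty := by
    rcases Finset.eq_empty_or_nonempty s with h | h
    · exfalso; have := hscov (Set.mem_univ x₀); subst h; simpa using this
    · exact h
  obtain ⟨l, hlne, hnd, hlfin, hch⟩ := exists_chain_list s hsne hδ hscov x₀
  set N := l.length with hNdef
  have hNcov : N = covN (Set.univ : Set K) δ := by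
    rw [← hscard, ← hlfin, List.toFinset_card_of_nodup hnd]
  have hN0 : 0 < N := List.length_pos_iff.2 hlne
  -- bounds from `R`
  have hbdd : ∀ x : K, dist x x₀ ≤ R := by
    obtain ⟨r, hr⟩ := hK.isBounded.subset_closedBall x₀
    have hb : BddAbove (Set.range fun x : K => dist x x₀) := by
      refine ⟨r, ?_⟩
      rintro v ⟨x, rfl⟩
      exact Metric.mem_closedBall.1 (hr (Set.mem_univ x))
    intro x
    rw [hR]
    exact le_ciSup hb x
  have hR0 : 0 ≤ R := le_trans dist_nonneg (hbdd x₀)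
  -- chain data
  set e : ℕ → K := fun i => l.getD i x₀ with hedef
  set p : ℕ → ℕ := fun i => if h : 0 < i ∧ i < N then (hch i h.1 h.2).choose else 0 with hpdef
  have hp : ∀ i, 0 < i → p i < i := by
    intro i hi
    rw [hpdef]
    dsimp only
    split
    · rename_i h
      exact (hch i h.1 h.2).choose_spec.1
    · exact hi
  have hstep : ∀ i, 0 < i → i < N → dist (e i) (e (p i)) ≤ 4 * δ := by
    intro i h1 h2
    have hpi : p i = (hch i h1 h2).choose := by
      rw [hpdef]; dsimp only; rw [dif_pos ⟨h1, h2⟩]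
    rw [hpi]
    exact (hch i h1 h2).choose_spec.2
  set F := {f : BoundedContinuousFunction K ℝ | LipschitzWith 1 ⇑f ∧ f x₀ = 0} with hFdef
  set gv : BoundedContinuousFunction K ℝ → ℕ → ℝ := fun f i => f (e i) with hgdef
  have hstepf : ∀ f ∈ F, ∀ i, 0 < i → i < N → |gv f i - gv f (p i)| ≤ η := by
    intro f hf i h1 h2
    calc |gv f i - gv f (p i)| = dist (f (e i)) (f (e (p i))) := (Real.dist_eq _ _).symm
      _ ≤ 1 * dist (e i) (e (p i)) := hf.1.dist_le_mul _ _
      _ ≤ 1 * (4 * δ) := by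
          have h := hstep i h1 h2
          linarith
      _ ≤ η := by rw [hδdef, hηdef]; linarith
  have hbase : ∀ f ∈ F, |gv f 0| ≤ R := by
    intro f hf
    calc |gv f 0| = dist (f (e 0)) (f x₀) := by
          rw [Real.dist_eq, hf.2, sub_zero]
      _ ≤ 1 * dist (e 0) x₀ := hf.1.dist_le_mul _ _
      _ ≤ R := by rw [one_mul]; exact hbdd _
  -- the code of a function
  set m : ℤ := (Nat.floor (4 * R / ε) : ℤ) with hmdef
  set code : BoundedContinuousFunction K ℝ → ℤ × (Fin N → Bool) := fun f =>
    (⌊gv f 0 / η⌋, fun i => decide (approxVal η p hp (gv f) (p i.1) ≤ gv f i.1)) with hcodedef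
  set W : Finset (ℤ × (Fin N → Bool)) := Finset.Icc (-(m + 1)) m ×ˢ Finset.univ with hWdef
  have hRη : R / η = 4 * R / ε := by rw [hηdef]; field_simp
  have hfl : ⌊R / η⌋ = m := by
    rw [hRη, hmdef]
    exact (Int.natCast_floor_eq_floor (by positivity)).symm
  have hcodeW : ∀ f ∈ F, code f ∈ W := by
    intro f hf
    rw [hWdef, Finset.mem_product]
    refine ⟨?_, Finset.mem_univ _⟩
    rw [Finset.mem_Icc]
    have hb := hbase f hf
    rw [abs_le] at hb
    constructor
    · have h1 : (-R) / η ≤ gv f 0 / η := by gcongr; exact hb.1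
      have h2 : ⌊(-R) / η⌋ = -⌈R / η⌉ := by rw [neg_div, Int.floor_neg]
      have h3 : ⌈R / η⌉ ≤ ⌊R / η⌋ + 1 := Int.ceil_le_floor_add_one _
      have h4 := Int.floor_le_floor (R := ℝ) h1
      rw [h2] at h4
      rw [hcodedef]
      dsimp only
      omega
    · have h1 : gv f 0 / η ≤ R / η := by gcongr; exact hb.2
      have h4 := Int.floor_le_floor (R := ℝ) h1
      rw [hfl] at h4
      rw [hcodedef]
      dsimp only
      exact h4
  -- the centers
  set ch : ℤ × (Fin N → Bool) → BoundedContinuousFunction K ℝ := fun w =>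
    if h : ∃ f, f ∈ F ∧ code f = w then h.choose else 0 with hchdef
  set t : Finset (BoundedContinuousFunction K ℝ) := W.image ch with htdef
  have hcover : F ⊆ ⋃ g ∈ (t : Finset (BoundedContinuousFunction K ℝ)),
      Metric.closedBall g ε := by
    intro f hf
    have hex : ∃ f', f' ∈ F ∧ code f' = code f := ⟨f, hf, rfl⟩
    have hgt : ch (code f) ∈ t := Finset.mem_image.2 ⟨code f, hcodeW f hf, rfl⟩
    refine Set.mem_iUnion₂.2 ⟨ch (code f), hgt, ?_⟩
    rw [Metric.mem_closedBall]
    have hgeq : ch (code f) = hex.choose := by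
      rw [hchdef]; dsimp only; rw [dif_pos hex]
    set f₀ := hex.choose with hf₀def
    obtain ⟨hf₀F, hf₀c⟩ := hex.choose_spec
    rw [hgeq]
    -- code components
    have h0 : ⌊gv f₀ 0 / η⌋ = ⌊gv f 0 / η⌋ := congrArg Prod.fst hf₀c
    have hbits : ∀ i, 0 < i → i < N →
        ((approxVal η p hp (gv f₀) (p i) ≤ gv f₀ i) ↔
          (approxVal η p hp (gv f) (p i) ≤ gv f i)) := by
      intro i h1 h2
      have := congrFun (congrArg Prod.snd hf₀c) ⟨i, h2⟩
      exact decide_eq_decide.1 this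
    have hAeq := approxVal_congr η p hp (gv f₀) (gv f) N h0 hbits
    have herr := approxVal_err η hη p hp (gv f) N (hstepf f hf)
    have herr₀ := approxVal_err η hη p hp (gv f₀) N (hstepf f₀ hf₀F)
    rw [BoundedContinuousFunction.dist_le hε.le]
    intro x
    obtain ⟨y, hy, hxy⟩ := Set.mem_iUnion₂.1 (hscov (Set.mem_univ x))
    rw [Metric.mem_closedBall] at hxy
    have hyl : y ∈ l := by rw [← List.mem_toFinset, hlfin]; exact hy
    obtain ⟨i, hi⟩ := List.mem_iff_get.1 hyl
    have hey : e i.1 = y := by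
      rw [hedef]; dsimp only; rw [List.getD_eq_getElem _ _ i.2]; exact hi
    have hmid : dist (f y) (f₀ y) ≤ 2 * η := by
      have h1 := herr i.1 i.2
      have h2 := herr₀ i.1 i.2
      rw [hAeq i.1 i.2] at h2
      rw [Real.dist_eq, ← hey]
      have : (f (e i.1) : ℝ) = gv f i.1 := rfl
      have h2' : (f₀ (e i.1) : ℝ) = gv f₀ i.1 := rfl
      rw [this, h2']
      rw [abs_le] at h1 h2 ⊢
      constructor <;> linarith
    have hfx : dist (f x) (f y) ≤ δ := by
      calc dist (f x) (f y) ≤ 1 * dist x y := hf.1.dist_le_mul _ _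
        _ ≤ δ := by rw [one_mul]; exact hxy
    have hf₀x : dist (f₀ y) (f₀ x) ≤ δ := by
      calc dist (f₀ y) (f₀ x) ≤ 1 * dist y x := hf₀F.1.dist_le_mul _ _
        _ ≤ δ := by rw [one_mul, dist_comm]; exact hxy
    calc dist (f x) (f₀ x) ≤ dist (f x) (f y) + dist (f y) (f₀ y) + dist (f₀ y) (f₀ x) :=
          dist_triangle4 _ _ _ _
      _ ≤ δ + 2 * η + δ := by linarith
      _ ≤ ε := by rw [hδdef, hηdef]; linarith
  have hle : covN F ε ≤ t.card := Nat.sInf_le ⟨t, rfl, hcover⟩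
  have hW : W.card = (2 + 2 * Nat.floor (4 * R / ε)) * 2 ^ N := by
    rw [hWdef, Finset.card_product, Int.card_Icc]
    have h1 : (m + 1 - -(m + 1)).toNat = 2 + 2 * Nat.floor (4 * R / ε) := by
      rw [hmdef]; omega
    have h2 : (Finset.univ : Finset (Fin N → Bool)).card = 2 ^ N := by
      rw [Finset.card_univ, Fintype.card_fun]
      simp
    rw [h1, h2]
  calc covN F ε ≤ t.card := hle
    _ ≤ W.card := Finset.card_image_le
    _ = (2 + 2 * Nat.floor (4 * R / ε)) * 2 ^ N := hW
    _ = (2 + 2 * Nat.floor (4 * R / ε)) * 2 ^ covN (Set.univ : Set K) (ε / 16) := by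
        rw [hNcov, hδdef]
end

section
/- Let (B_t)_{0 ≤ t ≤ 1} be a standard Brownian motion on [0,1], and for 0 < α < 1/2 let ‖B‖_α = sup_{s ≠ t ∈ [0,1]} |B_t − B_s| / |t−s|^α denote its α-Hölder seminorm. Then both m_α = E[ ‖B‖_α ] and s_α = ( E[ ‖B‖_α² ] )^{1/2} are bounded by C_α = 2^{1+α} · 2^{(1−2α)/4} / (1 − 2^{(α−1/2)/2}) · ‖Z‖_{4/(1−2α)}, where ‖Z‖_p denotes the L^p norm of a standard normal random variable Z. -/
open MeasureTheory ProbabilityTheory Real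
open scoped ENNReal NNReal

noncomputable section

/-- The unit interval `[0,1]`. -/
abbrev UnitI : Type := Set.Icc (0 : ℝ) 1

/-- The path space `C([0,1], ℝ)` with the sup-norm. -/
abbrev PathSp : Type := C(UnitI, ℝ)

/-- `γ` is the Wiener measure on `C([0,1], ℝ)`: the coordinate process
`B_t(ω) = ω(t)` is a standard Brownian motion. -/
structure IsWienerMeasure [MeasurableSpace PathSp] (γ : Measure PathSp) : Prop where
  prob : IsProbabilityMeasure γ
  start : γ {ω : PathSp | ω ⟨0, by norm_num⟩ = 0} = 1
  incr : ∀ s t : UnitI, (s : ℝ) ≤ t →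
    γ.map (fun ω : PathSp => ω t - ω s) = gaussianReal 0 (Real.toNNReal ((t : ℝ) - s))
  indep : ∀ (m : ℕ) (τ : Fin (m + 1) → UnitI), Monotone τ →
    iIndepFun
      (fun (i : Fin m) (ω : PathSp) => ω (τ i.succ) - ω (τ i.castSucc)) γ

end

noncomputable section

/-- The `L^p` norm of a standard normal random variable. -/
def normZ (p : ℝ) : ℝ := (∫ x : ℝ, |x| ^ p ∂(gaussianReal 0 1)) ^ (1 / p)

/-- The `α`-Hölder seminorm of a continuous path on `[0,1]`. -/
def holderSemi (lα : ℝ) (ω : PathSp) : ℝ :=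
  sSup {v : ℝ | ∃ s t : UnitI, s ≠ t ∧ v = |ω t - ω s| / |(t : ℝ) - (s : ℝ)| ^ lα}

noncomputable section
namespace BMAux

/-- dyadic point k/2^n clamped to [0,1] -/
def pt (n k : ℕ) : UnitI :=
  ⟨min ((k : ℝ) / 2 ^ n) 1, ⟨le_min (by positivity) zero_le_one, min_le_right _ _⟩⟩

lemma pt_coe {n k : ℕ} (h : k ≤ 2 ^ n) : (pt n k : ℝ) = (k : ℝ) / 2 ^ n := by
  have : (k : ℝ) / 2 ^ n ≤ 1 := by
    rw [div_le_one (by positivity)]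
    exact_mod_cast h
  simp [pt, this]

/-- `M n ω = (∑_{k<2^n} |Δ_{n,k}|^p)^{1/p}` -/
def Mf (p : ℝ) (n : ℕ) (ω : PathSp) : ℝ :=
  (∑ k ∈ Finset.range (2 ^ n), |ω (pt n (k + 1)) - ω (pt n k)| ^ p) ^ (1 / p)

lemma Mf_nonneg {p : ℝ} (n : ℕ) (ω : PathSp) : 0 ≤ Mf p n ω := by
  apply Real.rpow_nonneg
  exact Finset.sum_nonneg fun k _ => Real.rpow_nonneg (abs_nonneg _) _

lemma abs_incr_le_Mf {p : ℝ} (hp : 0 < p) {n k : ℕ} (hk : k < 2 ^ n) (ω : PathSp) :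
    |ω (pt n (k + 1)) - ω (pt n k)| ≤ Mf p n ω := by
  have h1 : |ω (pt n (k + 1)) - ω (pt n k)| ^ p ≤
      ∑ j ∈ Finset.range (2 ^ n), |ω (pt n (j + 1)) - ω (pt n j)| ^ p :=
    Finset.single_le_sum (f := fun j => |ω (pt n (j + 1)) - ω (pt n j)| ^ p)
      (fun j _ => Real.rpow_nonneg (abs_nonneg _) _) (Finset.mem_range.2 hk)
  calc |ω (pt n (k + 1)) - ω (pt n k)|
      = (|ω (pt n (k + 1)) - ω (pt n k)| ^ p) ^ (1 / p) := by
        rw [← Real.rpow_mul (abs_nonneg _), mul_one_div, div_self hp.ne', Real.rpow_one]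
    _ ≤ Mf p n ω := Real.rpow_le_rpow (Real.rpow_nonneg (abs_nonneg _) _) h1 (by positivity)

end BMAux
end

noncomputable section
namespace BMAux2
open BMAux

/-- level-n floor index -/
def fl (n : ℕ) (s : UnitI) : ℕ := ⌊(s : ℝ) * 2 ^ n⌋₊

lemma s2n_nonneg (n : ℕ) (s : UnitI) : (0:ℝ) ≤ (s : ℝ) * 2 ^ n :=
  mul_nonneg s.2.1 (by positivity)

lemma fl_le_real (n : ℕ) (s : UnitI) : ((fl n s : ℕ) : ℝ) ≤ (s : ℝ) * 2 ^ n :=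
  Nat.floor_le (s2n_nonneg n s)

lemma lt_fl_add_one (n : ℕ) (s : UnitI) : (s : ℝ) * 2 ^ n < (fl n s : ℝ) + 1 :=
  Nat.lt_floor_add_one _

lemma fl_le (n : ℕ) (s : UnitI) : fl n s ≤ 2 ^ n := by
  have h1 : (s : ℝ) * 2 ^ n ≤ 2 ^ n := by
    have h := s.2.2
    nlinarith [(by positivity : (0:ℝ) < 2 ^ n)]
  calc fl n s ≤ ⌊((2:ℝ) ^ n)⌋₊ := Nat.floor_le_floor h1
    _ = 2 ^ n := by
        rw [show ((2:ℝ) ^ n) = ((2 ^ n : ℕ) : ℝ) by push_cast; ring, Nat.floor_natCast]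

/-- dyadic approximation from below -/
def dy (n : ℕ) (s : UnitI) : UnitI := pt n (fl n s)

lemma dy_coe (n : ℕ) (s : UnitI) : (dy n s : ℝ) = (fl n s : ℝ) / 2 ^ n :=
  pt_coe (fl_le n s)

lemma dy_le (n : ℕ) (s : UnitI) : (dy n s : ℝ) ≤ s := by
  rw [dy_coe, div_le_iff₀ (by positivity)]
  exact fl_le_real n s

lemma lt_dy_add (n : ℕ) (s : UnitI) : (s : ℝ) < (dy n s : ℝ) + ((2:ℝ) ^ n)⁻¹ := by
  rw [dy_coe]
  have h := lt_fl_add_one n s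
  have h2 : (0:ℝ) < 2 ^ n := by positivity
  rw [show ((fl n s : ℝ) / 2 ^ n + ((2:ℝ)^n)⁻¹) = ((fl n s : ℝ) + 1) / 2 ^ n by
    field_simp]
  rw [lt_div_iff₀ h2]
  nlinarith

lemma fl_succ_ge (n : ℕ) (s : UnitI) : 2 * fl n s ≤ fl (n + 1) s := by
  apply Nat.le_floor
  push_cast
  rw [pow_succ]
  have h := fl_le_real n s
  nlinarith

lemma fl_succ_le (n : ℕ) (s : UnitI) : fl (n + 1) s ≤ 2 * fl n s + 1 := by
  have h := lt_fl_add_one n s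
  apply Nat.le_of_lt_succ
  apply (Nat.floor_lt (s2n_nonneg _ _)).2
  push_cast
  rw [pow_succ]
  nlinarith

lemma abs_dy_succ_le {p : ℝ} (hp : 0 < p) (ω : PathSp) (s : UnitI) (n : ℕ) :
    |ω (dy (n + 1) s) - ω (dy n s)| ≤ Mf p (n + 1) ω := by
  have hdup : dy n s = pt (n + 1) (2 * fl n s) := by
    apply Subtype.ext
    rw [dy_coe, pt_coe (by have := fl_le n s; omega)]
    push_cast
    rw [pow_succ]
    field_simp
  have hcases : fl (n+1) s = 2 * fl n s ∨ fl (n+1) s = 2 * fl n s + 1 := by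
    have h1 := fl_succ_ge n s; have h2 := fl_succ_le n s; omega
  rcases hcases with h | h
  · rw [show dy (n+1) s = dy n s by rw [dy, h, hdup]]
    simpa using Mf_nonneg (p := p) (n+1) ω
  · have hlt : 2 * fl n s < 2 ^ (n + 1) := by
      have := fl_le (n + 1) s; omega
    rw [show dy (n + 1) s = pt (n+1) (2 * fl n s + 1) by rw [dy, h], hdup]
    exact abs_incr_le_Mf hp hlt ω

lemma bridge {p : ℝ} (hp : 0 < p) (ω : PathSp) (s t : UnitI) (m : ℕ)
    (hst : (s : ℝ) ≤ t) (hd : (t : ℝ) - s ≤ ((2:ℝ) ^ m)⁻¹) :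
    |ω (dy m t) - ω (dy m s)| ≤ Mf p m ω := by
  have h2m : (0:ℝ) < 2 ^ m := by positivity
  have h1 : fl m s ≤ fl m t := Nat.floor_le_floor (by nlinarith)
  have h2 : fl m t ≤ fl m s + 1 := by
    apply Nat.le_of_lt_succ
    apply (Nat.floor_lt (s2n_nonneg _ _)).2
    have hfs := lt_fl_add_one m s
    have hinv : ((2:ℝ)^m)⁻¹ * 2 ^ m = 1 := inv_mul_cancel₀ h2m.ne'
    push_cast
    nlinarith
  have hcases : fl m t = fl m s ∨ fl m t = fl m s + 1 := by omega
  rcases hcases with h | h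
  · rw [show dy m t = dy m s by rw [dy, h, dy]]
    simpa using Mf_nonneg (p := p) m ω
  · have hlt : fl m s < 2 ^ m := by have := fl_le m t; omega
    rw [show dy m t = pt m (fl m s + 1) by rw [dy, h]]
    exact abs_incr_le_Mf hp hlt ω

lemma tele {p : ℝ} (hp : 0 < p) (ω : PathSp) (s : UnitI) (m : ℕ) :
    ∀ N, m ≤ N → |ω (dy N s) - ω (dy m s)| ≤ ∑ n ∈ Finset.Icc (m + 1) N, Mf p n ω := by
  intro N hN
  induction N, hN using Nat.le_induction with
  | base => simp
  | succ N hN ih =>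
      have h1 := abs_dy_succ_le hp ω s N
      have h2 : |ω (dy (N+1) s) - ω (dy m s)| ≤
          |ω (dy (N+1) s) - ω (dy N s)| + |ω (dy N s) - ω (dy m s)| := abs_sub_le _ _ _
      rw [Finset.sum_Icc_succ_top (by omega)]
      linarith

lemma chain_fin {p : ℝ} (hp : 0 < p) (ω : PathSp) (s t : UnitI) (m N : ℕ) (hmN : m ≤ N)
    (hst : (s : ℝ) ≤ t) (hd : (t : ℝ) - s ≤ ((2:ℝ) ^ m)⁻¹) :
    |ω t - ω s| ≤ 2 * ∑ n ∈ Finset.Icc m N, Mf p n ω +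
      (|ω s - ω (dy N s)| + |ω t - ω (dy N t)|) := by
  have hsum : Mf p m ω + ∑ n ∈ Finset.Icc (m+1) N, Mf p n ω = ∑ n ∈ Finset.Icc m N, Mf p n ω := by
    rw [Finset.Icc_add_one_left_eq_Ioc]
    rw [← Finset.Ioc_insert_left hmN, Finset.sum_insert (by simp)]
  have h1 : |ω t - ω s| ≤ |ω t - ω (dy N t)| + |ω (dy N t) - ω (dy m t)| +
      |ω (dy m t) - ω (dy m s)| + |ω (dy m s) - ω (dy N s)| + |ω (dy N s) - ω s| := by
    have a1 := abs_sub_le (ω t) (ω (dy N t)) (ω s)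
    have a2 := abs_sub_le (ω (dy N t)) (ω (dy m t)) (ω s)
    have a3 := abs_sub_le (ω (dy m t)) (ω (dy m s)) (ω s)
    have a4 := abs_sub_le (ω (dy m s)) (ω (dy N s)) (ω s)
    linarith
  have h2 := tele hp ω t m N hmN
  have h3 : |ω (dy m s) - ω (dy N s)| ≤ ∑ n ∈ Finset.Icc (m+1) N, Mf p n ω := by
    rw [abs_sub_comm]; exact tele hp ω s m N hmN
  have h4 := bridge hp ω s t m hst hd
  have h5 : |ω (dy N s) - ω s| = |ω s - ω (dy N s)| := abs_sub_comm _ _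
  have h6 := Mf_nonneg (p := p) m ω
  linarith

end BMAux2
end

noncomputable section
namespace BMAux3
open BMAux BMAux2

/-- the dominating series -/
def G (al p : ℝ) (ω : PathSp) : ℝ≥0∞ :=
  ENNReal.ofReal ((2:ℝ) ^ (1 + al)) *
    ∑' n : ℕ, ENNReal.ofReal ((2:ℝ) ^ ((n : ℝ) * al) * Mf p n ω)

lemma dy_tendsto (ω : PathSp) (s : UnitI) :
    Filter.Tendsto (fun N => ω (dy N s)) Filter.atTop (nhds (ω s)) := by
  apply (ω.continuous.tendsto s).comp
  rw [Metric.tendsto_atTop]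
  intro ε hε
  obtain ⟨N₀, hN₀⟩ := exists_pow_lt_of_lt_one hε (by norm_num : (2:ℝ)⁻¹ < 1)
  refine ⟨N₀, fun N hN => ?_⟩
  have h1 : dist (dy N s) s = |(dy N s : ℝ) - s| := Subtype.dist_eq _ _
  have h2 := dy_le N s
  have h3 := lt_dy_add N s
  have h4 : ((2:ℝ) ^ N)⁻¹ ≤ ((2:ℝ) ^ N₀)⁻¹ := by
    apply inv_anti₀ (by positivity)
    exact pow_le_pow_right₀ (by norm_num) hN
  rw [h1, abs_of_nonpos (by linarith)]
  have : ((2:ℝ)⁻¹) ^ N₀ = ((2:ℝ) ^ N₀)⁻¹ := inv_pow 2 N₀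
  linarith [this ▸ hN₀]

lemma pair_bound_lt {al p : ℝ} (hα : 0 < al) (hp : 0 < p) (ω : PathSp) (s t : UnitI)
    (hst : (s : ℝ) < t) :
    ENNReal.ofReal (|ω t - ω s| / |(t : ℝ) - (s : ℝ)| ^ al) ≤ G al p ω := by
  classical
  set d : ℝ := (t : ℝ) - s with hd
  have hd0 : 0 < d := sub_pos.2 hst
  have hd1 : d ≤ 1 := by rw [hd]; linarith [t.2.2, s.2.1]
  -- find m
  have hex : ∃ m : ℕ, ((2:ℝ) ^ (m + 1))⁻¹ < d := by
    obtain ⟨n, hn⟩ := exists_pow_lt_of_lt_one hd0 (by norm_num : (2:ℝ)⁻¹ < 1)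
    refine ⟨n, ?_⟩
    rw [← inv_pow] at *
    calc ((2:ℝ)⁻¹) ^ (n+1) ≤ (2⁻¹) ^ n := by
          apply pow_le_pow_of_le_one (by norm_num) (by norm_num) (by omega)
      _ < d := hn
  set m := Nat.find hex with hm
  have hm1 : ((2:ℝ) ^ (m + 1))⁻¹ < d := Nat.find_spec hex
  have hm2 : d ≤ ((2:ℝ) ^ m)⁻¹ := by
    rcases Nat.eq_zero_or_pos m with h0 | h0
    · rw [h0]; simpa using hd1
    · have hmin := not_lt.1 (Nat.find_min hex (m := m - 1) (by omega))
      have heq : m - 1 + 1 = m := by omega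
      rw [heq] at hmin
      exact hmin
  have habs : |(t : ℝ) - (s : ℝ)| = d := abs_of_pos hd0
  set q : ℝ := ((m : ℝ) + 1) * al with hq
  -- the key finite-N bound
  have key : ∀ N, m ≤ N → ENNReal.ofReal (|ω t - ω s| / |(t : ℝ) - (s : ℝ)| ^ al) ≤
      G al p ω + ENNReal.ofReal ((2:ℝ) ^ q *
        (|ω s - ω (dy N s)| + |ω t - ω (dy N t)|)) := by
    intro N hN
    set Sn : ℝ := ∑ n ∈ Finset.Icc m N, Mf p n ω with hSn
    set E : ℝ := |ω s - ω (dy N s)| + |ω t - ω (dy N t)| with hE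
    have hchain : |ω t - ω s| ≤ 2 * Sn + E := chain_fin hp ω s t m N hN hst.le hm2
    have hSnn : 0 ≤ Sn := Finset.sum_nonneg fun n _ => Mf_nonneg n ω
    have hEnn : 0 ≤ E := by positivity
    have hpowq : ((2:ℝ) ^ (m + 1 : ℕ))⁻¹ ^ al = (2:ℝ) ^ (-q) := by
      rw [← Real.rpow_natCast 2 (m + 1), ← Real.rpow_neg (by norm_num : (0:ℝ) ≤ 2),
        ← Real.rpow_mul (by norm_num : (0:ℝ) ≤ 2)]
      congr 1
      push_cast
      ring
    have hdpow : (2:ℝ) ^ (-q) ≤ d ^ al := by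
      rw [← hpowq]
      exact Real.rpow_le_rpow (by positivity) hm1.le hα.le
    have hval : |ω t - ω s| / |(t : ℝ) - (s : ℝ)| ^ al ≤ (2:ℝ) ^ q * (2 * Sn + E) := by
      rw [habs]
      have h1 : |ω t - ω s| / d ^ al ≤ (2 * Sn + E) / (2:ℝ) ^ (-q) := by
        apply div_le_div₀ (by linarith) hchain (by positivity) hdpow
      calc |ω t - ω s| / d ^ al ≤ (2 * Sn + E) / (2:ℝ) ^ (-q) := h1
        _ = (2:ℝ) ^ q * (2 * Sn + E) := by
            rw [Real.rpow_neg (by norm_num : (0:ℝ) ≤ 2), div_eq_mul_inv, inv_inv]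
            ring
    have step1 : ENNReal.ofReal (|ω t - ω s| / |(t : ℝ) - (s : ℝ)| ^ al) ≤
        ENNReal.ofReal ((2:ℝ) ^ q * (2 * Sn)) + ENNReal.ofReal ((2:ℝ) ^ q * E) := by
      calc ENNReal.ofReal (|ω t - ω s| / |(t : ℝ) - (s : ℝ)| ^ al)
          ≤ ENNReal.ofReal ((2:ℝ) ^ q * (2 * Sn) + (2:ℝ) ^ q * E) := by
            apply ENNReal.ofReal_le_ofReal
            calc _ ≤ (2:ℝ) ^ q * (2 * Sn + E) := hval
              _ = (2:ℝ) ^ q * (2 * Sn) + (2:ℝ) ^ q * E := by ring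
        _ ≤ _ := ENNReal.ofReal_add_le
    refine step1.trans (add_le_add ?_ le_rfl)
    -- main term into G
    have hsum_eq : (2:ℝ) ^ q * (2 * Sn) = ∑ n ∈ Finset.Icc m N, (2:ℝ) ^ q * 2 * Mf p n ω := by
      rw [hSn, Finset.mul_sum, Finset.mul_sum]
      apply Finset.sum_congr rfl
      intro n _
      ring
    rw [hsum_eq, ENNReal.ofReal_sum_of_nonneg
      (fun n _ => by have := Mf_nonneg (p := p) n ω; positivity)]
    have hterm : ∀ n ∈ Finset.Icc m N, ENNReal.ofReal ((2:ℝ) ^ q * 2 * Mf p n ω) ≤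
        ENNReal.ofReal ((2:ℝ) ^ (1 + al)) *
          ENNReal.ofReal ((2:ℝ) ^ ((n : ℝ) * al) * Mf p n ω) := by
      intro n hn
      have hmn : (m : ℝ) ≤ (n : ℝ) := by
        exact_mod_cast (Finset.mem_Icc.1 hn).1
      rw [← ENNReal.ofReal_mul (by positivity)]
      apply ENNReal.ofReal_le_ofReal
      have hc : (2:ℝ) ^ q * 2 ≤ (2:ℝ) ^ (1 + al) * (2:ℝ) ^ ((n : ℝ) * al) := by
        calc (2:ℝ) ^ q * 2 = (2:ℝ) ^ (q + 1) := by
              rw [Real.rpow_add (by norm_num : (0:ℝ) < 2), Real.rpow_one]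
          _ ≤ (2:ℝ) ^ (1 + al + (n : ℝ) * al) := by
              apply Real.rpow_le_rpow_of_exponent_le (by norm_num)
              rw [hq]
              nlinarith [hα.le]
          _ = (2:ℝ) ^ (1 + al) * (2:ℝ) ^ ((n : ℝ) * al) := by
              rw [← Real.rpow_add (by norm_num : (0:ℝ) < 2)]
      calc (2:ℝ) ^ q * 2 * Mf p n ω ≤ (2:ℝ) ^ (1 + al) * (2:ℝ) ^ ((n : ℝ) * al) * Mf p n ω :=
            mul_le_mul_of_nonneg_right hc (Mf_nonneg n ω)
        _ = (2:ℝ) ^ (1 + al) * ((2:ℝ) ^ ((n : ℝ) * al) * Mf p n ω) := by ring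
    calc ∑ n ∈ Finset.Icc m N, ENNReal.ofReal ((2:ℝ) ^ q * 2 * Mf p n ω)
        ≤ ∑ n ∈ Finset.Icc m N, ENNReal.ofReal ((2:ℝ) ^ (1 + al)) *
            ENNReal.ofReal ((2:ℝ) ^ ((n : ℝ) * al) * Mf p n ω) := Finset.sum_le_sum hterm
      _ = ENNReal.ofReal ((2:ℝ) ^ (1 + al)) * ∑ n ∈ Finset.Icc m N,
            ENNReal.ofReal ((2:ℝ) ^ ((n : ℝ) * al) * Mf p n ω) := by rw [Finset.mul_sum]
      _ ≤ G al p ω := by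
          apply mul_le_mul_right
          exact ENNReal.sum_le_tsum _
  -- pass to the limit
  rw [show |d| = |(t:ℝ) - (s:ℝ)| from by rw [hd]]
  apply ENNReal.le_of_forall_pos_le_add
  intro ε hε _
  have hE1 : Filter.Tendsto (fun N => |ω s - ω (dy N s)|) Filter.atTop (nhds 0) := by
    have := (tendsto_const_nhds (x := ω s)).sub (dy_tendsto ω s)
    simpa using this.abs
  have hE2 : Filter.Tendsto (fun N => |ω t - ω (dy N t)|) Filter.atTop (nhds 0) := by
    have := (tendsto_const_nhds (x := ω t)).sub (dy_tendsto ω t)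
    simpa using this.abs
  have hE : Filter.Tendsto (fun N => (2:ℝ) ^ q *
      (|ω s - ω (dy N s)| + |ω t - ω (dy N t)|)) Filter.atTop (nhds 0) := by
    have := (hE1.add hE2).const_mul ((2:ℝ) ^ q)
    simpa using this
  have hεR : (0:ℝ) < (ε : ℝ) := by exact_mod_cast hε
  have hev := hE.eventually_lt_const hεR
  rw [Filter.eventually_atTop] at hev
  obtain ⟨N₁, hN₁⟩ := hev
  have hkey := key (max m N₁) (le_max_left _ _)
  refine hkey.trans (add_le_add le_rfl ?_)
  calc ENNReal.ofReal ((2:ℝ) ^ q * (|ω s - ω (dy (max m N₁) s)| + |ω t - ω (dy (max m N₁) t)|))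
      ≤ ENNReal.ofReal (ε : ℝ) := ENNReal.ofReal_le_ofReal (hN₁ _ (le_max_right _ _)).le
    _ = (ε : ℝ≥0∞) := ENNReal.ofReal_coe_nnreal

end BMAux3
end

noncomputable section

namespace BMAux4
open BMAux BMAux2 BMAux3

lemma pair_bound {al p : ℝ} (hα : 0 < al) (hp : 0 < p) (ω : PathSp) (s t : UnitI)
    (hst : s ≠ t) :
    ENNReal.ofReal (|ω t - ω s| / |(t : ℝ) - (s : ℝ)| ^ al) ≤ G al p ω := by
  rcases (show (s:ℝ) ≠ (t:ℝ) from fun h => hst (Subtype.ext h)).lt_or_gt with h | h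
  · exact pair_bound_lt hα hp ω s t h
  · rw [abs_sub_comm (ω t), abs_sub_comm ((t:ℝ))]
    exact pair_bound_lt hα hp ω t s h

lemma holder_nonneg (al : ℝ) (ω : PathSp) : 0 ≤ holderSemi al ω := by
  apply Real.sSup_nonneg
  rintro v ⟨s, t, hst, rfl⟩
  exact div_nonneg (abs_nonneg _) (Real.rpow_nonneg (abs_nonneg _) _)

lemma holder_le_G {al p : ℝ} (hα : 0 < al) (hp : 0 < p) (ω : PathSp) :
    ENNReal.ofReal (holderSemi al ω) ≤ G al p ω := by
  by_cases hfin : G al p ω = ⊤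
  · rw [hfin]; exact le_top
  · apply ENNReal.ofReal_le_of_le_toReal
    apply Real.sSup_le _ ENNReal.toReal_nonneg
    rintro v ⟨s, t, hst, rfl⟩
    have h := pair_bound hα hp ω s t hst
    have hv : 0 ≤ |ω t - ω s| / |(t : ℝ) - (s : ℝ)| ^ al :=
      div_nonneg (abs_nonneg _) (Real.rpow_nonneg (abs_nonneg _) _)
    calc |ω t - ω s| / |(t : ℝ) - (s : ℝ)| ^ al
        = (ENNReal.ofReal (|ω t - ω s| / |(t : ℝ) - (s : ℝ)| ^ al)).toReal := by
          rw [ENNReal.toReal_ofReal hv]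
      _ ≤ (G al p ω).toReal := ENNReal.toReal_mono hfin h

/-- a dense sequence in the unit interval -/
def useq : ℕ → UnitI := TopologicalSpace.denseSeq UnitI

lemma denseRange_useq : DenseRange useq := TopologicalSpace.denseRange_denseSeq UnitI

/-- countable family of quotient values -/
def qf (al : ℝ) (i j : ℕ) (ω : PathSp) : ℝ :=
  if useq i ≠ useq j then |ω (useq j) - ω (useq i)| / |(useq j : ℝ) - (useq i : ℝ)| ^ al else 0

lemma qf_nonneg (al : ℝ) (i j : ℕ) (ω : PathSp) : 0 ≤ qf al i j ω := by
  unfold qf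
  split
  · exact div_nonneg (abs_nonneg _) (Real.rpow_nonneg (abs_nonneg _) _)
  · exact le_refl 0

lemma continuous_qf (al : ℝ) (i j : ℕ) : Continuous (qf al i j) := by
  unfold qf
  split
  · apply Continuous.div_const
    exact ((continuous_eval_const _).sub
      (continuous_eval_const _)).abs
  · exact continuous_const

lemma approx_seq (x : UnitI) : ∃ I : ℕ → ℕ,
    Filter.Tendsto (fun n => useq (I n)) Filter.atTop (nhds x) := by
  have h : ∀ n : ℕ, ∃ i : ℕ, dist (useq i) x < 1 / (n + 1) := by
    intro n
    obtain ⟨y, hy, ⟨i, rfl⟩⟩ := Metric.dense_iff.1 denseRange_useq x (1 / (n + 1))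
      (by positivity)
    exact ⟨i, by rwa [Metric.mem_ball] at hy⟩
  choose I hI using h
  refine ⟨I, Metric.tendsto_atTop.2 fun ε hε => ?_⟩
  obtain ⟨N, hN⟩ := exists_nat_one_div_lt hε
  refine ⟨N, fun n hn => ?_⟩
  calc dist (useq (I n)) x < 1 / (n + 1) := hI n
    _ ≤ 1 / (N + 1) := by
        apply div_le_div_of_nonneg_left (by norm_num) (by positivity)
        have : (N:ℝ) ≤ n := by exact_mod_cast hn
        linarith
    _ < ε := hN

lemma pair_le_of_qf_le {al B : ℝ} (ω : PathSp) (hB : ∀ i j, qf al i j ω ≤ B)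
    (s t : UnitI) (hst : s ≠ t) :
    |ω t - ω s| / |(t : ℝ) - (s : ℝ)| ^ al ≤ B := by
  obtain ⟨I, hIt⟩ := approx_seq s
  obtain ⟨J, hJt⟩ := approx_seq t
  have hδ : 0 < dist s t := dist_pos.2 (fun h => hst h)
  have hne : |(t : ℝ) - (s : ℝ)| ≠ 0 := by
    rw [abs_ne_zero, sub_ne_zero]
    exact fun h => hst (Subtype.ext h.symm)
  -- the quotient values converge
  have hnum : Filter.Tendsto (fun n => |ω (useq (J n)) - ω (useq (I n))|)
      Filter.atTop (nhds (|ω t - ω s|)) :=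
    (((ω.continuous.tendsto t).comp hJt).sub ((ω.continuous.tendsto s).comp hIt)).abs
  have hcoeI : Filter.Tendsto (fun n => (useq (I n) : ℝ)) Filter.atTop (nhds (s : ℝ)) :=
    (continuous_subtype_val.tendsto s).comp hIt
  have hcoeJ : Filter.Tendsto (fun n => (useq (J n) : ℝ)) Filter.atTop (nhds (t : ℝ)) :=
    (continuous_subtype_val.tendsto t).comp hJt
  have hden : Filter.Tendsto (fun n => |(useq (J n) : ℝ) - (useq (I n) : ℝ)| ^ al)
      Filter.atTop (nhds (|(t : ℝ) - (s : ℝ)| ^ al)) := by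
    apply Filter.Tendsto.comp
      ((Real.continuousAt_rpow_const _ al (Or.inl hne)).tendsto)
    exact (hcoeJ.sub hcoeI).abs
  have hF : Filter.Tendsto
      (fun n => |ω (useq (J n)) - ω (useq (I n))| / |(useq (J n) : ℝ) - (useq (I n) : ℝ)| ^ al)
      Filter.atTop (nhds (|ω t - ω s| / |(t : ℝ) - (s : ℝ)| ^ al)) := by
    apply hnum.div hden
    intro h
    exact hne (by
      have := Real.rpow_natCast (|(t : ℝ) - (s : ℝ)|) 1
      -- |x|^al = 0 → |x| = 0 using rpow_eq_zero
      have hx : 0 ≤ |(t : ℝ) - (s : ℝ)| := abs_nonneg _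
      rcases (Real.rpow_eq_zero hx (by
        intro hal
        rw [hal, Real.rpow_zero] at h
        norm_num at h)).1 h with h'
      exact h')
  -- eventually the quotient equals qf
  have hev : ∀ᶠ n in Filter.atTop,
      |ω (useq (J n)) - ω (useq (I n))| / |(useq (J n) : ℝ) - (useq (I n) : ℝ)| ^ al ≤ B := by
    have h1 : ∀ᶠ n in Filter.atTop, dist (useq (I n)) s < dist s t / 2 :=
      hIt (Metric.ball_mem_nhds s (by linarith))
    have h2 : ∀ᶠ n in Filter.atTop, dist (useq (J n)) t < dist s t / 2 :=
      hJt (Metric.ball_mem_nhds t (by linarith))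
    filter_upwards [h1, h2] with n hn1 hn2
    have hne' : useq (I n) ≠ useq (J n) := by
      intro h
      have h3 := dist_triangle s (useq (I n)) t
      rw [h] at h3
      have h4 : dist s (useq (J n)) = dist (useq (I n)) s := by rw [h, dist_comm]
      have h5 : dist (useq (J n)) t ≤ dist s t / 2 := hn2.le
      linarith [h4 ▸ h3]
    have := hB (I n) (J n)
    rwa [qf, if_pos hne'] at this
  exact le_of_tendsto hF hev

lemma holder_eq (al : ℝ) (ω : PathSp) :
    holderSemi al ω = (⨆ ij : ℕ × ℕ, ENNReal.ofReal (qf al ij.1 ij.2 ω)).toReal := by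
  classical
  set T := ⨆ ij : ℕ × ℕ, ENNReal.ofReal (qf al ij.1 ij.2 ω) with hT
  set S := {v : ℝ | ∃ s t : UnitI, s ≠ t ∧ v = |ω t - ω s| / |(t : ℝ) - (s : ℝ)| ^ al} with hS
  by_cases hfin : T = ⊤
  · have hnb : ¬BddAbove S := by
      rintro ⟨B, hB⟩
      have hq : ∀ ij : ℕ × ℕ, ENNReal.ofReal (qf al ij.1 ij.2 ω) ≤
          ENNReal.ofReal (max B 0) := by
        rintro ⟨i, j⟩
        apply ENNReal.ofReal_le_ofReal
        by_cases h : useq i ≠ useq j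
        · have hmem : qf al i j ω ∈ S := by
            rw [qf, if_pos h]
            exact ⟨useq i, useq j, h, rfl⟩
          exact (hB hmem).trans (le_max_left _ _)
        · rw [qf, if_neg h]
          exact le_max_right _ _
      have := iSup_le hq
      rw [← hT, hfin] at this
      exact (ENNReal.ofReal_ne_top) (top_le_iff.1 this)
    rw [holderSemi, ← hS, sSup_of_not_bddAbove hnb, hfin]
    simp
  · have hqB : ∀ i j, qf al i j ω ≤ T.toReal := by
      intro i j
      have h1 : ENNReal.ofReal (qf al i j ω) ≤ T := le_iSup
        (fun ij : ℕ × ℕ => ENNReal.ofReal (qf al ij.1 ij.2 ω)) (i, j)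
      calc qf al i j ω = (ENNReal.ofReal (qf al i j ω)).toReal := by
            rw [ENNReal.toReal_ofReal (qf_nonneg al i j ω)]
        _ ≤ T.toReal := ENNReal.toReal_mono hfin h1
    have hub : ∀ v ∈ S, v ≤ T.toReal := by
      rintro v ⟨s, t, hst, rfl⟩
      exact pair_le_of_qf_le ω hqB s t hst
    apply le_antisymm
    · rw [holderSemi, ← hS]
      exact Real.sSup_le hub ENNReal.toReal_nonneg
    · have hSnn : 0 ≤ sSup S := by
        apply Real.sSup_nonneg
        rintro v ⟨s, t, hst, rfl⟩
        exact div_nonneg (abs_nonneg _) (Real.rpow_nonneg (abs_nonneg _) _)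
      apply ENNReal.toReal_le_of_le_ofReal hSnn
      apply iSup_le
      rintro ⟨i, j⟩
      apply ENNReal.ofReal_le_ofReal
      by_cases h : useq i ≠ useq j
      · have hmem : qf al i j ω ∈ S := by
          rw [qf, if_pos h]
          exact ⟨useq i, useq j, h, rfl⟩
        exact le_csSup ⟨T.toReal, hub⟩ hmem
      · rw [qf, if_neg h]
        exact hSnn

lemma measurable_holder [MeasurableSpace PathSp] [BorelSpace PathSp] (al : ℝ) :
    Measurable (holderSemi al) := by
  have heq : holderSemi al = fun ω =>
      (⨆ ij : ℕ × ℕ, ENNReal.ofReal (qf al ij.1 ij.2 ω)).toReal :=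
    funext (holder_eq al)
  rw [heq]
  apply ENNReal.measurable_toReal.comp
  apply Measurable.iSup
  intro ij
  exact ((continuous_qf al ij.1 ij.2).measurable).ennreal_ofReal

end BMAux4
end

noncomputable section
namespace BMAux5
open BMAux BMAux2 BMAux3 BMAux4

lemma iSup_rpow_mono (a : ℕ → ℝ≥0∞) (ha : Monotone a) {c : ℝ} (hc : 0 ≤ c) :
    (⨆ n, a n) ^ c = ⨆ n, (a n) ^ c := by
  apply tendsto_nhds_unique
    ((ENNReal.continuous_rpow_const.tendsto _).comp (tendsto_atTop_iSup ha))
  exact tendsto_atTop_iSup (fun i j h => ENNReal.rpow_le_rpow (ha h) hc)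

/-- Minkowski's inequality for a series of `ℝ≥0∞`-valued functions, exponent 2 -/
lemma lp2_tsum_le {X : Type*} [MeasurableSpace X] (μ : Measure X) (f : ℕ → X → ℝ≥0∞)
    (hf : ∀ n, Measurable (f n)) :
    (∫⁻ x, (∑' n, f n x) ^ (2:ℝ) ∂μ) ^ (1/2 : ℝ) ≤
      ∑' n, (∫⁻ x, (f n x) ^ (2:ℝ) ∂μ) ^ (1/2 : ℝ) := by
  set F : ℕ → X → ℝ≥0∞ := fun N x => ∑ n ∈ Finset.range N, f n x with hF
  have hFmeas : ∀ N, Measurable (F N) := fun N => Finset.measurable_sum _ (fun n _ => hf n)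
  have hFmono : Monotone F := fun i j h x =>
    Finset.sum_le_sum_of_subset (Finset.range_subset_range.2 h)
  have hmink : ∀ N, (∫⁻ x, (F N x) ^ (2:ℝ) ∂μ) ^ (1/2 : ℝ) ≤
      ∑ n ∈ Finset.range N, (∫⁻ x, (f n x) ^ (2:ℝ) ∂μ) ^ (1/2 : ℝ) := by
    intro N
    induction N with
    | zero =>
        simp [hF, ENNReal.zero_rpow_of_pos]
    | succ N ih =>
        have hstep : (∫⁻ x, (F N x + f N x) ^ (2:ℝ) ∂μ) ^ (1/2 : ℝ) ≤
            (∫⁻ x, (F N x) ^ (2:ℝ) ∂μ) ^ (1/2 : ℝ) +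
              (∫⁻ x, (f N x) ^ (2:ℝ) ∂μ) ^ (1/2 : ℝ) := by
          have := ENNReal.lintegral_Lp_add_le (p := (2:ℝ)) (μ := μ)
            ((hFmeas N).aemeasurable) ((hf N).aemeasurable) (by norm_num)
          simpa using this
        have hFrw : ∀ x, F (N+1) x = F N x + f N x := by
          intro x; rw [hF]; exact Finset.sum_range_succ _ _
        rw [Finset.sum_range_succ]
        calc (∫⁻ x, (F (N+1) x) ^ (2:ℝ) ∂μ) ^ (1/2 : ℝ)
            = (∫⁻ x, (F N x + f N x) ^ (2:ℝ) ∂μ) ^ (1/2 : ℝ) := by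
              congr 1; apply lintegral_congr; intro x; rw [hFrw x]
          _ ≤ _ := hstep
          _ ≤ _ := add_le_add ih le_rfl
  have hptw : ∀ x, (∑' n, f n x) ^ (2:ℝ) = ⨆ N, (F N x) ^ (2:ℝ) := by
    intro x
    rw [ENNReal.tsum_eq_iSup_nat]
    exact iSup_rpow_mono _ (fun i j h => hFmono h x) (by norm_num)
  have hint : ∫⁻ x, (∑' n, f n x) ^ (2:ℝ) ∂μ = ⨆ N, ∫⁻ x, (F N x) ^ (2:ℝ) ∂μ := by
    rw [lintegral_congr hptw]
    apply lintegral_iSup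
    · exact fun N => (ENNReal.continuous_rpow_const.measurable).comp (hFmeas N)
    · intro i j h x
      exact ENNReal.rpow_le_rpow (hFmono h x) (by norm_num)
  rw [hint]
  have hsup : (⨆ N, ∫⁻ x, (F N x) ^ (2:ℝ) ∂μ) ≤
      (∑' n, (∫⁻ x, (f n x) ^ (2:ℝ) ∂μ) ^ (1/2 : ℝ)) ^ (2:ℝ) := by
    apply iSup_le
    intro N
    have h1 : ∫⁻ x, (F N x) ^ (2:ℝ) ∂μ =
        ((∫⁻ x, (F N x) ^ (2:ℝ) ∂μ) ^ (1/2 : ℝ)) ^ (2:ℝ) := by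
      rw [← ENNReal.rpow_mul]
      norm_num
    rw [h1]
    apply ENNReal.rpow_le_rpow _ (by norm_num)
    exact (hmink N).trans (ENNReal.sum_le_tsum _)
  calc (⨆ N, ∫⁻ x, (F N x) ^ (2:ℝ) ∂μ) ^ (1/2 : ℝ)
      ≤ (((∑' n, (∫⁻ x, (f n x) ^ (2:ℝ) ∂μ) ^ (1/2 : ℝ)) ^ (2:ℝ)) : ℝ≥0∞) ^ (1/2:ℝ) :=
        ENNReal.rpow_le_rpow hsup (by norm_num)
    _ = ∑' n, (∫⁻ x, (f n x) ^ (2:ℝ) ∂μ) ^ (1/2 : ℝ) := by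
        rw [← ENNReal.rpow_mul]
        norm_num

end BMAux5
end

noncomputable section
namespace BMAux6
open BMAux BMAux2 BMAux3 BMAux4 BMAux5

/-- p-th absolute moment of the standard gaussian, as a lower integral -/
def Ip (p : ℝ) : ℝ≥0∞ := ∫⁻ x, ENNReal.ofReal (|x| ^ p) ∂(gaussianReal 0 1)

lemma continuous_abs_rpow {p : ℝ} (hp : 0 ≤ p) : Continuous fun x : ℝ => |x| ^ p := by
  have h : Continuous fun x : ℝ => x ^ p :=
    continuous_iff_continuousAt.2 (fun x => Real.continuousAt_rpow_const x p (Or.inr hp))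
  exact h.comp continuous_abs

lemma measurable_ofReal_abs_rpow {p : ℝ} (hp : 0 ≤ p) :
    Measurable fun x : ℝ => ENNReal.ofReal (|x| ^ p) :=
  ((continuous_abs_rpow hp).measurable).ennreal_ofReal

lemma integrable_abs_rpow_mul_exp {b : ℝ} (hb : 0 < b) {p : ℝ} (hp : -1 < p) :
    Integrable fun x : ℝ => |x| ^ p * Real.exp (-b * x ^ 2) := by
  have key : IntegrableOn (fun x : ℝ => |x| ^ p * Real.exp (-b * x ^ 2)) (Set.Ioi 0) :=
    (integrableOn_rpow_mul_exp_neg_mul_sq hb hp).congr_fun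
      (fun x hx => by rw [abs_of_pos hx]) measurableSet_Ioi
  rw [← integrableOn_univ, ← @Set.Iio_union_Ici _ _ (0 : ℝ), integrableOn_union,
    integrableOn_Ici_iff_integrableOn_Ioi]
  refine ⟨?_, key⟩
  rw [← (Measure.measurePreserving_neg (volume : Measure ℝ)).integrableOn_comp_preimage
      (Homeomorph.neg ℝ).measurableEmbedding]
  simp only [Function.comp_def, neg_sq, Set.neg_preimage, Set.neg_Iio, neg_neg, neg_zero, abs_neg]
  exact key

lemma gauss_scale {p : ℝ} (hp : 0 ≤ p) (v : ℝ≥0) :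
    ∫⁻ y, ENNReal.ofReal (|y| ^ p) ∂(gaussianReal 0 v) =
      ENNReal.ofReal (Real.sqrt v ^ p) * Ip p := by
  have hvv : (.mk (Real.sqrt (v:ℝ) ^ 2) (sq_nonneg _) * 1 : ℝ≥0) = v := by
    ext
    simp only [NNReal.coe_mul, NNReal.coe_mk, NNReal.coe_one, mul_one]
    exact Real.sq_sqrt v.2
  have hmap : (gaussianReal 0 1).map (fun x => Real.sqrt v * x) = gaussianReal 0 v := by
    have h := gaussianReal_map_const_mul (μ := 0) (v := 1) (Real.sqrt v)
    rw [mul_zero, hvv] at h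
    exact h
  have hg : Measurable fun x : ℝ => Real.sqrt v * x := measurable_id.const_mul _
  rw [← hmap, lintegral_map (measurable_ofReal_abs_rpow hp) hg]
  have hptw : ∀ x : ℝ, ENNReal.ofReal (|Real.sqrt v * x| ^ p) =
      ENNReal.ofReal (Real.sqrt v ^ p) * ENNReal.ofReal (|x| ^ p) := by
    intro x
    rw [abs_mul, abs_of_nonneg (Real.sqrt_nonneg _),
      Real.mul_rpow (Real.sqrt_nonneg _) (abs_nonneg _),
      ENNReal.ofReal_mul (by positivity)]
  rw [lintegral_congr hptw, lintegral_const_mul' _ _ ENNReal.ofReal_ne_top]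
  rfl

lemma Ip_ne_top {p : ℝ} (hp0 : 0 ≤ p) : Ip p ≠ ⊤ := by
  have hp : (-1:ℝ) < p := by linarith
  have hint : Integrable (fun x : ℝ => |x| ^ p * ((Real.sqrt (2 * Real.pi * 1))⁻¹ *
      Real.exp (-(x - 0) ^ 2 / (2 * 1)))) := by
    have h1 : Integrable (fun x : ℝ => |x| ^ p * Real.exp (-(1/2 : ℝ) * x ^ 2)) :=
      integrable_abs_rpow_mul_exp (by norm_num) hp
    have h2 := h1.const_mul ((Real.sqrt (2 * Real.pi * 1))⁻¹)
    apply h2.congr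
    apply ae_of_all
    intro x
    have hexp : -(1/2 : ℝ) * x ^ 2 = -(x - 0) ^ 2 / (2 * 1) := by ring
    dsimp only
    rw [hexp]
    ring
  have hmeas : Measurable fun x : ℝ => ENNReal.ofReal (|x| ^ p) :=
    measurable_ofReal_abs_rpow hp0
  rw [Ip, gaussianReal_of_var_ne_zero 0 one_ne_zero]
  rw [lintegral_withDensity_eq_lintegral_mul _ (measurable_gaussianPDF 0 1) hmeas]
  have hptw : ∀ x : ℝ, (gaussianPDF 0 1 * fun x => ENNReal.ofReal (|x| ^ p)) x =
      ENNReal.ofReal (|x| ^ p * ((Real.sqrt (2 * Real.pi * 1))⁻¹ *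
        Real.exp (-(x - 0) ^ 2 / (2 * 1)))) := by
    intro x
    simp only [Pi.mul_apply, gaussianPDF, gaussianPDFReal_def]
    rw [← ENNReal.ofReal_mul (by positivity)]
    push_cast
    rw [mul_comm]
  rw [lintegral_congr hptw]
  exact hint.lintegral_lt_top.ne

lemma Ip_rpow_eq {p : ℝ} (hp : 0 < p) : (Ip p) ^ (1/p : ℝ) = ENNReal.ofReal (normZ p) := by
  have h1 : ∫ x : ℝ, |x| ^ p ∂(gaussianReal 0 1) = (Ip p).toReal := by
    rw [Ip, integral_eq_lintegral_of_nonneg_ae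
      (ae_of_all _ (fun x => Real.rpow_nonneg (abs_nonneg _) _))
      ((continuous_abs_rpow hp.le).aestronglyMeasurable)]
  rw [normZ, h1, ← ENNReal.ofReal_rpow_of_nonneg ENNReal.toReal_nonneg (by positivity),
    ENNReal.ofReal_toReal (Ip_ne_top hp.le)]

end BMAux6
end

noncomputable section
namespace BMAux7
open BMAux BMAux2 BMAux3 BMAux4 BMAux5 BMAux6

lemma pt_mono (n k : ℕ) : ((pt n k : UnitI) : ℝ) ≤ (pt n (k+1) : UnitI) := by
  apply min_le_min _ le_rfl
  apply div_le_div_of_nonneg_right _ (by positivity)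
  push_cast
  linarith

lemma pt_diff {n k : ℕ} (hk : k < 2 ^ n) :
    ((pt n (k+1) : UnitI) : ℝ) - (pt n k : UnitI) = ((2:ℝ) ^ n)⁻¹ := by
  rw [pt_coe (by omega), pt_coe (by omega), div_sub_div_same]
  push_cast
  rw [add_sub_cancel_left, one_div]

lemma continuous_Mf {p : ℝ} (hp : 0 < p) (n : ℕ) : Continuous (Mf p n) := by
  unfold Mf
  have houter : Continuous fun y : ℝ => y ^ (1/p : ℝ) :=
    continuous_iff_continuousAt.2 (fun x => Real.continuousAt_rpow_const x _ (Or.inr (by positivity)))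
  apply houter.comp
  apply continuous_finset_sum
  intro k _
  exact (continuous_abs_rpow hp.le).comp
    ((continuous_eval_const _).sub (continuous_eval_const _))

variable [MeasurableSpace PathSp] [BorelSpace PathSp]

lemma measurable_incr (n k : ℕ) :
    Measurable fun ω : PathSp => ω (pt n (k+1)) - ω (pt n k) :=
  (((continuous_eval_const _).sub (continuous_eval_const _))).measurable

lemma lint_Mfp (γ : Measure PathSp) (hγ : IsWienerMeasure γ) {p : ℝ} (hp : 0 < p) (n : ℕ) :
    ∫⁻ ω, (ENNReal.ofReal (Mf p n ω)) ^ p ∂γ =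
      ((2 ^ n : ℕ) : ℝ≥0∞) * (ENNReal.ofReal (Real.sqrt ((2:ℝ) ^ n)⁻¹ ^ p) * Ip p) := by
  have h1 : ∀ ω : PathSp, (ENNReal.ofReal (Mf p n ω)) ^ p =
      ENNReal.ofReal (∑ k ∈ Finset.range (2 ^ n), |ω (pt n (k+1)) - ω (pt n k)| ^ p) := by
    intro ω
    rw [ENNReal.ofReal_rpow_of_nonneg (Mf_nonneg n ω) hp.le]
    congr 1
    rw [Mf, ← Real.rpow_mul (Finset.sum_nonneg fun k _ => Real.rpow_nonneg (abs_nonneg _) _),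
      one_div, inv_mul_cancel₀ hp.ne', Real.rpow_one]
  rw [lintegral_congr h1]
  have h2 : ∀ ω : PathSp, ENNReal.ofReal (∑ k ∈ Finset.range (2 ^ n),
      |ω (pt n (k+1)) - ω (pt n k)| ^ p) = ∑ k ∈ Finset.range (2 ^ n),
        ENNReal.ofReal (|ω (pt n (k+1)) - ω (pt n k)| ^ p) := fun ω =>
    ENNReal.ofReal_sum_of_nonneg (fun k _ => Real.rpow_nonneg (abs_nonneg _) _)
  rw [lintegral_congr h2, lintegral_finset_sum _ (fun k _ => by
    have hc : Continuous fun ω : PathSp => |ω (pt n (k+1)) - ω (pt n k)| ^ p :=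
      (continuous_abs_rpow hp.le).comp (((continuous_eval_const _).sub
        (continuous_eval_const _)))
    exact hc.measurable.ennreal_ofReal)]
  have h3 : ∀ k ∈ Finset.range (2 ^ n),
      ∫⁻ ω, ENNReal.ofReal (|ω (pt n (k+1)) - ω (pt n k)| ^ p) ∂γ =
        ENNReal.ofReal (Real.sqrt ((2:ℝ) ^ n)⁻¹ ^ p) * Ip p := by
    intro k hk
    have hk' : k < 2 ^ n := Finset.mem_range.1 hk
    have hinc := hγ.incr (pt n k) (pt n (k+1)) (pt_mono n k)
    have hmap : ∫⁻ ω, ENNReal.ofReal (|ω (pt n (k+1)) - ω (pt n k)| ^ p) ∂γ =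
        ∫⁻ y, ENNReal.ofReal (|y| ^ p) ∂(γ.map (fun ω : PathSp => ω (pt n (k+1)) - ω (pt n k))) :=
      (lintegral_map (measurable_ofReal_abs_rpow hp.le) (measurable_incr n k)).symm
    rw [hmap, hinc, pt_diff hk', gauss_scale hp.le]
    congr 3
    rw [Real.coe_toNNReal _ (by positivity)]
  rw [Finset.sum_congr rfl h3, Finset.sum_const, Finset.card_range, nsmul_eq_mul]

lemma L2_Mf_le (γ : Measure PathSp) (hγ : IsWienerMeasure γ) {p : ℝ} (hp2 : 2 ≤ p) (n : ℕ) :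
    (∫⁻ ω, (ENNReal.ofReal (Mf p n ω)) ^ (2:ℝ) ∂γ) ^ (1/2 : ℝ) ≤
      (((2 ^ n : ℕ) : ℝ≥0∞)) ^ (1/p : ℝ) *
        (ENNReal.ofReal (Real.sqrt ((2:ℝ) ^ n)⁻¹) * (Ip p) ^ (1/p : ℝ)) := by
  haveI := hγ.prob
  have hp0 : 0 < p := by linarith
  have hmeas := ((continuous_Mf hp0 n)).measurable
  -- identify with eLpNorms
  have e2 : eLpNorm (Mf p n) 2 γ = (∫⁻ ω, (ENNReal.ofReal (Mf p n ω)) ^ (2:ℝ) ∂γ) ^ (1/2 : ℝ) := by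
    rw [eLpNorm_eq_lintegral_rpow_enorm_toReal (by norm_num) (by norm_num)]
    simp only [ENNReal.toReal_ofNat]
    congr 1
    apply lintegral_congr
    intro ω
    rw [Real.enorm_eq_ofReal (Mf_nonneg n ω)]
  have ep : eLpNorm (Mf p n) (ENNReal.ofReal p) γ =
      (∫⁻ ω, (ENNReal.ofReal (Mf p n ω)) ^ p ∂γ) ^ (1/p : ℝ) := by
    rw [eLpNorm_eq_lintegral_rpow_enorm_toReal (by simp [ENNReal.ofReal_eq_zero]; linarith)
      ENNReal.ofReal_ne_top]
    rw [ENNReal.toReal_ofReal hp0.le]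
    apply congrArg (· ^ (1/p : ℝ))
    apply lintegral_congr
    intro ω
    rw [Real.enorm_eq_ofReal (Mf_nonneg n ω)]
  have hcmp : eLpNorm (Mf p n) 2 γ ≤ eLpNorm (Mf p n) (ENNReal.ofReal p) γ := by
    apply eLpNorm_le_eLpNorm_of_exponent_le _ hmeas.aestronglyMeasurable
    rw [show (2 : ℝ≥0∞) = ENNReal.ofReal (2:ℝ) by norm_num]
    exact ENNReal.ofReal_le_ofReal hp2
  rw [e2, ep, lint_Mfp γ hγ hp0 n] at hcmp
  refine hcmp.trans (le_of_eq ?_)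
  rw [ENNReal.mul_rpow_of_ne_top (by simp) (ENNReal.mul_ne_top ENNReal.ofReal_ne_top
    (Ip_ne_top hp0.le)),
    ENNReal.mul_rpow_of_ne_top ENNReal.ofReal_ne_top (Ip_ne_top hp0.le),
    ENNReal.ofReal_rpow_of_nonneg (by positivity) (by positivity)]
  have hσ : ((Real.sqrt ((2:ℝ)^n)⁻¹ ^ p) ^ (1/p : ℝ)) = Real.sqrt ((2:ℝ)^n)⁻¹ := by
    rw [← Real.rpow_mul (Real.sqrt_nonneg _), mul_one_div, div_self hp0.ne', Real.rpow_one]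
  rw [hσ]

end BMAux7
end

noncomputable section
namespace BMAux8
open BMAux BMAux2 BMAux3 BMAux4 BMAux5 BMAux6 BMAux7

variable [MeasurableSpace PathSp] [BorelSpace PathSp]

theorem core (γ : Measure PathSp) (hγ : IsWienerMeasure γ) {al : ℝ}
    (hα0 : 0 < al) (hα1 : al < 1/2) :
    (∫⁻ ω, (ENNReal.ofReal (holderSemi al ω)) ^ (2:ℝ) ∂γ) ^ (1/2:ℝ) ≤
      ENNReal.ofReal ((2:ℝ) ^ (1 + al) * (2:ℝ) ^ ((1 - 2*al)/4) /
        (1 - (2:ℝ) ^ ((al - 1/2)/2)) * normZ (4/(1 - 2*al))) := by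
  haveI := hγ.prob
  have hden : 0 < 1 - 2*al := by linarith
  set p : ℝ := 4/(1 - 2*al) with hpdef
  have hp4 : 4 ≤ p := by
    rw [hpdef, le_div_iff₀ hden]
    nlinarith
  have hp0 : 0 < p := by linarith
  have hinvp : 1/p = (1 - 2*al)/4 := by
    rw [hpdef, one_div_div]
  set ρ : ℝ := (2:ℝ) ^ ((al - 1/2)/2) with hρdef
  have hρ0 : 0 < ρ := Real.rpow_pos_of_pos (by norm_num) _
  have hρ1 : ρ < 1 := Real.rpow_lt_one_of_one_lt_of_neg (by norm_num) (by linarith)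
  set f : ℕ → PathSp → ℝ≥0∞ :=
    fun n ω => ENNReal.ofReal ((2:ℝ) ^ ((n:ℝ) * al) * Mf p n ω) with hfdef
  have hfmeas : ∀ n, Measurable (f n) := fun n =>
    ((continuous_const.mul (continuous_Mf hp0 n)).measurable).ennreal_ofReal
  set T : PathSp → ℝ≥0∞ := fun ω => ∑' n, f n ω with hTdef
  have hTmeas : Measurable T := Measurable.ennreal_tsum hfmeas
  set c : ℝ≥0∞ := ENNReal.ofReal ((2:ℝ) ^ (1 + al)) with hcdef
  have hc_ne : c ≠ ⊤ := ENNReal.ofReal_ne_top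
  -- Step A/B : bound by c * T
  have hAB : (∫⁻ ω, (ENNReal.ofReal (holderSemi al ω)) ^ (2:ℝ) ∂γ) ^ (1/2:ℝ) ≤
      (∫⁻ ω, (c * T ω) ^ (2:ℝ) ∂γ) ^ (1/2:ℝ) := by
    apply ENNReal.rpow_le_rpow _ (by norm_num)
    apply lintegral_mono
    intro ω
    apply ENNReal.rpow_le_rpow _ (by norm_num)
    exact holder_le_G hα0 hp0 ω
  -- Step C : pull out the constant
  have hC : (∫⁻ ω, (c * T ω) ^ (2:ℝ) ∂γ) ^ (1/2:ℝ) =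
      c * (∫⁻ ω, (T ω) ^ (2:ℝ) ∂γ) ^ (1/2:ℝ) := by
    have h1 : ∀ ω, (c * T ω) ^ (2:ℝ) = c ^ (2:ℝ) * (T ω) ^ (2:ℝ) := fun ω =>
      ENNReal.mul_rpow_of_nonneg _ _ (by norm_num)
    rw [lintegral_congr h1, lintegral_const_mul' _ _
      (ENNReal.rpow_ne_top_of_nonneg (by norm_num) hc_ne),
      ENNReal.mul_rpow_of_nonneg _ _ (by norm_num : (0:ℝ) ≤ 1/2),
      ← ENNReal.rpow_mul]
    norm_num
  -- Step D : Minkowski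
  have hD : (∫⁻ ω, (T ω) ^ (2:ℝ) ∂γ) ^ (1/2:ℝ) ≤
      ∑' n, (∫⁻ ω, (f n ω) ^ (2:ℝ) ∂γ) ^ (1/2:ℝ) := lp2_tsum_le γ f hfmeas
  -- Step E : term bound
  have hE : ∀ n : ℕ, (∫⁻ ω, (f n ω) ^ (2:ℝ) ∂γ) ^ (1/2:ℝ) ≤
      ENNReal.ofReal (ρ ^ n) * (Ip p) ^ (1/p : ℝ) := by
    intro n
    set cn : ℝ≥0∞ := ENNReal.ofReal ((2:ℝ) ^ ((n:ℝ) * al)) with hcndef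
    have hcn_ne : cn ≠ ⊤ := ENNReal.ofReal_ne_top
    have h1 : ∀ ω : PathSp, f n ω = cn * ENNReal.ofReal (Mf p n ω) := by
      intro ω
      rw [hcndef, ← ENNReal.ofReal_mul (by positivity)]
    have h2 : (∫⁻ ω, (f n ω) ^ (2:ℝ) ∂γ) ^ (1/2:ℝ) =
        cn * (∫⁻ ω, (ENNReal.ofReal (Mf p n ω)) ^ (2:ℝ) ∂γ) ^ (1/2:ℝ) := by
      have h1' : ∀ ω, (f n ω) ^ (2:ℝ) = cn ^ (2:ℝ) *
          (ENNReal.ofReal (Mf p n ω)) ^ (2:ℝ) := fun ω => by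
        rw [h1 ω, ENNReal.mul_rpow_of_nonneg _ _ (by norm_num)]
      rw [lintegral_congr h1', lintegral_const_mul' _ _
        (ENNReal.rpow_ne_top_of_nonneg (by norm_num) hcn_ne),
        ENNReal.mul_rpow_of_nonneg _ _ (by norm_num : (0:ℝ) ≤ 1/2),
        ← ENNReal.rpow_mul]
      norm_num
    rw [h2]
    have h3 := L2_Mf_le γ hγ (by linarith : 2 ≤ p) n
    calc cn * (∫⁻ ω, (ENNReal.ofReal (Mf p n ω)) ^ (2:ℝ) ∂γ) ^ (1/2:ℝ)
        ≤ cn * ((((2 ^ n : ℕ) : ℝ≥0∞)) ^ (1/p : ℝ) *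
            (ENNReal.ofReal (Real.sqrt ((2:ℝ) ^ n)⁻¹) * (Ip p) ^ (1/p : ℝ))) :=
          mul_le_mul_right h3 _
      _ = ENNReal.ofReal (ρ ^ n) * (Ip p) ^ (1/p : ℝ) := by
          have hnat : (((2 ^ n : ℕ) : ℝ≥0∞)) ^ (1/p : ℝ) =
              ENNReal.ofReal (((2:ℝ) ^ n) ^ (1/p : ℝ)) := by
            rw [← ENNReal.ofReal_rpow_of_nonneg (by positivity) (by positivity)]
            congr 1
            rw [← ENNReal.ofReal_natCast (2^n)]
            congr 1
            push_cast
            ring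
          rw [hnat, hcndef]
          rw [show ENNReal.ofReal ((2:ℝ) ^ ((n:ℝ) * al)) *
              (ENNReal.ofReal (((2:ℝ)^n) ^ (1/p:ℝ)) *
                (ENNReal.ofReal (Real.sqrt ((2:ℝ)^n)⁻¹) * (Ip p)^(1/p:ℝ))) =
              ENNReal.ofReal ((2:ℝ)^((n:ℝ)*al)) * ENNReal.ofReal (((2:ℝ)^n)^(1/p:ℝ)) *
                ENNReal.ofReal (Real.sqrt ((2:ℝ)^n)⁻¹) * (Ip p)^(1/p:ℝ) from by ring]
          rw [← ENNReal.ofReal_mul (by positivity), ← ENNReal.ofReal_mul (by positivity)]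
          have hrho : (2:ℝ) ^ ((n:ℝ) * al) * ((2:ℝ)^n) ^ ((1:ℝ)/p) *
              Real.sqrt (((2:ℝ)^n)⁻¹) = ρ ^ n := by
            have h2n : ((2:ℝ)^n) = (2:ℝ) ^ ((n:ℝ)) := (Real.rpow_natCast 2 n).symm
            rw [h2n, ← Real.rpow_mul (by norm_num : (0:ℝ) ≤ 2), Real.sqrt_eq_rpow,
              ← Real.rpow_neg (by norm_num : (0:ℝ) ≤ 2),
              ← Real.rpow_mul (by norm_num : (0:ℝ) ≤ 2),
              ← Real.rpow_add (by norm_num : (0:ℝ) < 2),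
              ← Real.rpow_add (by norm_num : (0:ℝ) < 2),
              ← Real.rpow_natCast ρ n, hρdef,
              ← Real.rpow_mul (by norm_num : (0:ℝ) ≤ 2)]
            congr 1
            push_cast
            linear_combination (n:ℝ) * hinvp
          rw [hrho]
  -- Step F : geometric series
  have hF : ∑' n : ℕ, (∫⁻ ω, (f n ω) ^ (2:ℝ) ∂γ) ^ (1/2:ℝ) ≤
      (1 - ENNReal.ofReal ρ)⁻¹ * (Ip p) ^ (1/p : ℝ) := by
    calc ∑' n : ℕ, (∫⁻ ω, (f n ω) ^ (2:ℝ) ∂γ) ^ (1/2:ℝ)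
        ≤ ∑' n : ℕ, ENNReal.ofReal (ρ ^ n) * (Ip p) ^ (1/p : ℝ) := ENNReal.tsum_le_tsum hE
      _ = (∑' n : ℕ, ENNReal.ofReal (ρ ^ n)) * (Ip p) ^ (1/p : ℝ) := ENNReal.tsum_mul_right
      _ = (1 - ENNReal.ofReal ρ)⁻¹ * (Ip p) ^ (1/p : ℝ) := by
          congr 1
          have hpow : ∀ n : ℕ, ENNReal.ofReal (ρ ^ n) = (ENNReal.ofReal ρ) ^ n := fun n =>
            ENNReal.ofReal_pow hρ0.le n
          rw [tsum_congr hpow, ENNReal.tsum_geometric]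
  -- Step G : put everything together
  have hZ : 0 ≤ normZ p :=
    Real.rpow_nonneg (integral_nonneg (fun x => Real.rpow_nonneg (abs_nonneg _) _)) _
  have h1r : 0 < 1 - ρ := by linarith
  have hβ : (1:ℝ) ≤ (2:ℝ) ^ ((1 - 2*al)/4) := by
    have h := Real.rpow_le_rpow_of_exponent_le (by norm_num : (1:ℝ) ≤ 2)
      (show (0:ℝ) ≤ (1 - 2*al)/4 by linarith)
    rwa [Real.rpow_zero] at h
  calc (∫⁻ ω, (ENNReal.ofReal (holderSemi al ω)) ^ (2:ℝ) ∂γ) ^ (1/2:ℝ)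
      ≤ (∫⁻ ω, (c * T ω) ^ (2:ℝ) ∂γ) ^ (1/2:ℝ) := hAB
    _ = c * (∫⁻ ω, (T ω) ^ (2:ℝ) ∂γ) ^ (1/2:ℝ) := hC
    _ ≤ c * ∑' n : ℕ, (∫⁻ ω, (f n ω) ^ (2:ℝ) ∂γ) ^ (1/2:ℝ) := mul_le_mul_right hD _
    _ ≤ c * ((1 - ENNReal.ofReal ρ)⁻¹ * (Ip p) ^ (1/p : ℝ)) := mul_le_mul_right hF _
    _ = ENNReal.ofReal ((2:ℝ) ^ (1 + al) * ((1 - ρ)⁻¹ * normZ p)) := by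
        rw [Ip_rpow_eq hp0,
          show (1 - ENNReal.ofReal ρ) = ENNReal.ofReal (1 - ρ) from by
            rw [ENNReal.ofReal_sub _ hρ0.le, ENNReal.ofReal_one],
          ← ENNReal.ofReal_inv_of_pos h1r, hcdef,
          ← ENNReal.ofReal_mul (by positivity), ← ENNReal.ofReal_mul (by positivity)]
    _ ≤ ENNReal.ofReal ((2:ℝ) ^ (1 + al) * (2:ℝ) ^ ((1 - 2*al)/4) / (1 - ρ) * normZ p) := by
        apply ENNReal.ofReal_le_ofReal
        have key : (1 - ρ)⁻¹ * normZ p ≤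
            (2:ℝ) ^ ((1 - 2*al)/4) * ((1 - ρ)⁻¹ * normZ p) :=
          le_mul_of_one_le_left (by positivity) hβ
        calc (2:ℝ) ^ (1 + al) * ((1 - ρ)⁻¹ * normZ p)
            ≤ (2:ℝ) ^ (1 + al) * ((2:ℝ) ^ ((1 - 2*al)/4) * ((1 - ρ)⁻¹ * normZ p)) :=
              mul_le_mul_of_nonneg_left key (by positivity)
          _ = (2:ℝ) ^ (1 + al) * (2:ℝ) ^ ((1 - 2*al)/4) / (1 - ρ) * normZ p := by
              rw [div_eq_mul_inv]
              ring

end BMAux8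
end


open BMAux BMAux2 BMAux3 BMAux4 BMAux5 BMAux6 BMAux7 BMAux8

/-- Bounds on the first and second moments of the `α`-Hölder seminorm of standard Brownian
motion (Corollary `holder_moments_sbm` of the paper). -/
theorem brownian_holder_moment_bounds
    [MeasurableSpace PathSp] [BorelSpace PathSp]
    (γ : Measure PathSp) (hγ : IsWienerMeasure γ)
    (lα : ℝ) (hα0 : 0 < lα) (hα1 : lα < 1 / 2) :
    (∫ ω, holderSemi lα ω ∂γ ≤
      (2 : ℝ) ^ (1 + lα) * (2 : ℝ) ^ ((1 - 2 * lα) / 4) /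
        (1 - (2 : ℝ) ^ ((lα - 1 / 2) / 2)) * normZ (4 / (1 - 2 * lα))) ∧
    (Real.sqrt (∫ ω, holderSemi lα ω ^ 2 ∂γ) ≤
      (2 : ℝ) ^ (1 + lα) * (2 : ℝ) ^ ((1 - 2 * lα) / 4) /
        (1 - (2 : ℝ) ^ ((lα - 1 / 2) / 2)) * normZ (4 / (1 - 2 * lα))) := by
  haveI := hγ.prob
  have hmeas : Measurable (holderSemi lα) := measurable_holder lα
  have hnn : ∀ ω, 0 ≤ holderSemi lα ω := holder_nonneg lα
  set C : ℝ := (2 : ℝ) ^ (1 + lα) * (2 : ℝ) ^ ((1 - 2 * lα) / 4) /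
      (1 - (2 : ℝ) ^ ((lα - 1 / 2) / 2)) * normZ (4 / (1 - 2 * lα)) with hCdef
  have hρ1 : (2:ℝ) ^ ((lα - 1/2)/2) < 1 :=
    Real.rpow_lt_one_of_one_lt_of_neg (by norm_num) (by linarith)
  have h1r : 0 < 1 - (2:ℝ) ^ ((lα - 1/2)/2) := by linarith
  have hZ : 0 ≤ normZ (4 / (1 - 2 * lα)) :=
    Real.rpow_nonneg (integral_nonneg (fun x => Real.rpow_nonneg (abs_nonneg _) _)) _
  have hC0 : 0 ≤ C := by
    rw [hCdef]
    have h2a : (0:ℝ) < (2:ℝ) ^ (1 + lα) := Real.rpow_pos_of_pos (by norm_num) _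
    have h2b : (0:ℝ) < (2:ℝ) ^ ((1 - 2*lα)/4) := Real.rpow_pos_of_pos (by norm_num) _
    positivity
  have hcore : (∫⁻ ω, (ENNReal.ofReal (holderSemi lα ω)) ^ (2:ℝ) ∂γ) ^ (1/2:ℝ) ≤
      ENNReal.ofReal C := by
    have h := core γ hγ hα0 (by linarith : lα < 1/2)
    rw [hCdef]
    convert h using 4 <;> norm_num
  set A : ℝ≥0∞ := ∫⁻ ω, (ENNReal.ofReal (holderSemi lα ω)) ^ (2:ℝ) ∂γ with hAdef
  -- second moment bound
  have hsq_int : ∫ ω, holderSemi lα ω ^ 2 ∂γ = A.toReal := by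
    rw [integral_eq_lintegral_of_nonneg_ae (ae_of_all _ fun ω => sq_nonneg _)
      ((hmeas.pow_const 2).aestronglyMeasurable), hAdef]
    congr 1
    apply lintegral_congr
    intro ω
    rw [ENNReal.ofReal_pow (hnn ω), ← ENNReal.rpow_natCast]
    norm_num
  have hA_le : A ≤ ENNReal.ofReal (C ^ 2) := by
    have h1 : A = (A ^ (1/2:ℝ)) ^ (2:ℝ) := by
      rw [← ENNReal.rpow_mul]
      norm_num
    rw [h1]
    calc (A ^ (1/2:ℝ)) ^ (2:ℝ) ≤ (ENNReal.ofReal C) ^ (2:ℝ) :=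
          ENNReal.rpow_le_rpow hcore (by norm_num)
      _ = ENNReal.ofReal (C ^ (2:ℝ)) := ENNReal.ofReal_rpow_of_nonneg hC0 (by norm_num)
      _ = ENNReal.ofReal (C ^ 2) := by
          rw [← Real.rpow_natCast C 2]
          norm_num
  have part2 : Real.sqrt (∫ ω, holderSemi lα ω ^ 2 ∂γ) ≤ C := by
    rw [hsq_int]
    have h2 : A.toReal ≤ C ^ 2 :=
      ENNReal.toReal_le_of_le_ofReal (by positivity) hA_le
    calc Real.sqrt A.toReal ≤ Real.sqrt (C ^ 2) := Real.sqrt_le_sqrt h2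
      _ = C := Real.sqrt_sq hC0
  -- first moment bound
  have hlin : ∫ ω, holderSemi lα ω ∂γ =
      (∫⁻ ω, ENNReal.ofReal (holderSemi lα ω) ∂γ).toReal :=
    integral_eq_lintegral_of_nonneg_ae (ae_of_all _ hnn) hmeas.aestronglyMeasurable
  have hcs : ∫⁻ ω, ENNReal.ofReal (holderSemi lα ω) ∂γ ≤ A ^ (1/2:ℝ) := by
    have conj : Real.HolderConjugate 2 2 := Real.HolderConjugate.two_two
    have h2 := ENNReal.lintegral_mul_le_Lp_mul_Lq γ conj
      (hmeas.ennreal_ofReal.aemeasurable) (aemeasurable_const (b := (1:ℝ≥0∞)))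
    simp only [Pi.mul_apply, mul_one, ENNReal.one_rpow, lintegral_one, measure_univ] at h2
    exact h2
  have part1 : ∫ ω, holderSemi lα ω ∂γ ≤ C := by
    rw [hlin]
    exact ENNReal.toReal_le_of_le_ofReal hC0 (hcs.trans hcore)
  exact ⟨part1, part2⟩


end
end
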